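/- arXiv:2203.03491 — 11 statements merged into one kernel-verified Lean document; each statement's English description precedes it below -/
import Mathlib

section
/- Let 𝓗 be a family of finite simple graphs and let G be an 𝓗-free graph. Then G is strongly 𝓗-free if and only if G is fs(𝓗)-free, where fs(𝓗) is the family of all 𝓗-free-split graphs. -/
open SimpleGraph

/-- The contraction `G/uv` of the edge between `u` and `v`: the vertex `v` is deleted
and merged into `u`, whose new neighbourhood is `(N(u) ∪ N(v)) \\ {u, v}`. -/
def SimpleGraph.contractEdge {V : Type*} (G : SimpleGraph V) (u v : V) :
    SimpleGraph {x : V // x ≠ v} :=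
  SimpleGraph.fromRel fun a b => G.Adj a.1 b.1 ∨ (a.1 = u ∧ G.Adj v b.1)

/-- A family of finite simple graphs, whose members are given (up to isomorphism)
as graphs on `Fin n`. -/
abbrev GraphFamily := Set (Σ n : ℕ, SimpleGraph (Fin n))

/-- `G` is `ℋ`-free: no induced subgraph of `G` is isomorphic to a member of `ℋ`. -/
def FamFree {V : Type*} (G : SimpleGraph V) (ℋ : GraphFamily) : Prop :=
  ∀ H ∈ ℋ, ¬ Nonempty (H.2 ↪g G)

/-- Every `G`-contraction is `ℋ`-free. -/
def AllContractionsFamFree {V : Type*} (G : SimpleGraph V) (ℋ : GraphFamily) : Prop :=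
  ∀ u v, G.Adj u v → FamFree (G.contractEdge u v) ℋ

/-- `G` is `ℋ`-split: some `G`-contraction is isomorphic to a member of `ℋ`. -/
def FamSplit {V : Type*} (G : SimpleGraph V) (ℋ : GraphFamily) : Prop :=
  ∃ u v, G.Adj u v ∧ ∃ H ∈ ℋ, Nonempty (H.2 ≃g G.contractEdge u v)

/-- `fs(ℋ)`: the family of all `ℋ`-free-split graphs. -/
def FreeSplitFam (ℋ : GraphFamily) : GraphFamily :=
  {J | FamFree J.2 ℋ ∧ FamSplit J.2 ℋ}

lemma contractEdge_adj {V : Type*} (G : SimpleGraph V) (u v : V) (a b : {x : V // x ≠ v}) :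
    (G.contractEdge u v).Adj a b ↔
      a ≠ b ∧ (G.Adj a.1 b.1 ∨ (a.1 = u ∧ G.Adj v b.1) ∨ (b.1 = u ∧ G.Adj v a.1)) := by
  rw [SimpleGraph.contractEdge, fromRel_adj]
  have h := G.adj_comm a.1 b.1
  tauto

/-- Contraction of an edge in an induced subgraph embeds into the contraction of the
image edge. -/
def contractEmbed {V W : Type*} {A : SimpleGraph V} {B : SimpleGraph W} (f : A ↪g B)
    (u v : V) : A.contractEdge u v ↪g B.contractEdge (f u) (f v) where
  toFun := fun x => ⟨f x.1, fun h => x.2 (f.injective h)⟩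
  inj' := fun x y h => Subtype.ext (f.injective (congrArg Subtype.val h))
  map_rel_iff' := by
    intro a b
    change (B.contractEdge (f u) (f v)).Adj ⟨f a.1, _⟩ ⟨f b.1, _⟩ ↔ _
    rw [contractEdge_adj, contractEdge_adj]
    simp [Subtype.ext_iff, f.injective.eq_iff, f.map_adj_iff]

/-- An `ℋ`-free graph `G` is strongly `ℋ`-free (every `G`-contraction is `ℋ`-free)
if and only if `G` is `fs(ℋ)`-free. -/
theorem stmt1 {V : Type*} [Fintype V] (G : SimpleGraph V) (ℋ : GraphFamily)
    (hfree : FamFree G ℋ) :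
    AllContractionsFamFree G ℋ ↔ FamFree G (FreeSplitFam ℋ) := by
  constructor
  · rintro hs J ⟨hJfree, u, v, huv, H, hH, ⟨φ⟩⟩ ⟨f⟩
    exact hs (f u) (f v) (f.map_adj_iff.mpr huv) H hH
      ⟨(contractEmbed f u v).comp φ.toEmbedding⟩
  · intro h u v huv H hH
    rintro ⟨e⟩
    by_cases hu : ∃ i, ((e i : {x : V // x ≠ v}) : V) = u
    · obtain ⟨i0, hi0⟩ := hu
      set g : Fin (H.1 + 1) → V :=
        Fin.lastCases v (fun i => ((e i : {x : V // x ≠ v}) : V)) with hg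
      have hgc : ∀ i : Fin H.1, g i.castSucc = ((e i : {x : V // x ≠ v}) : V) := fun i =>
        Fin.lastCases_castSucc i
      have hgl : g (Fin.last H.1) = v := Fin.lastCases_last
      have heu : ∀ i : Fin H.1, ((e i : {x : V // x ≠ v}) : V) = u ↔ i = i0 := fun i =>
        ⟨fun h' => e.injective (Subtype.ext (h'.trans hi0.symm)), fun h' => h' ▸ hi0⟩
      have ginj : Function.Injective g := by
        intro a b hab
        induction a using Fin.lastCases with
        | last =>
          induction b using Fin.lastCases with
          | last => rfl
          | cast j =>
            rw [hgl, hgc] at hab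
            exact absurd hab.symm (e j).2
        | cast i =>
          induction b using Fin.lastCases with
          | last =>
            rw [hgl, hgc] at hab
            exact absurd hab (e i).2
          | cast j =>
            rw [hgc, hgc] at hab
            exact congrArg Fin.castSucc (e.injective (Subtype.ext hab))
      set gE : Fin (H.1 + 1) ↪ V := ⟨g, ginj⟩ with hgE
      set J' : SimpleGraph (Fin (H.1 + 1)) := G.comap gE with hJ'
      have hJ'adj : ∀ a b, J'.Adj a b ↔ G.Adj (g a) (g b) := fun a b => Iff.rfl
      have hlast : ∀ i : Fin H.1, i.castSucc ≠ Fin.last H.1 := fun i =>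
        (Fin.castSucc_lt_last i).ne
      let ψ : Fin H.1 ≃ {x : Fin (H.1 + 1) // x ≠ Fin.last H.1} :=
        { toFun := fun i => ⟨i.castSucc, hlast i⟩
          invFun := fun x => x.1.castPred x.2
          left_inv := fun i => Fin.castPred_castSucc (hlast i)
          right_inv := fun x => Subtype.ext (Fin.castSucc_castPred x.1 x.2) }
      have iso : Nonempty (H.2 ≃g J'.contractEdge i0.castSucc (Fin.last H.1)) := by
        refine ⟨⟨ψ, ?_⟩⟩
        intro i j
        show (J'.contractEdge i0.castSucc (Fin.last H.1)).Adj ⟨i.castSucc, _⟩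
          ⟨j.castSucc, _⟩ ↔ H.2.Adj i j
        rw [← e.map_adj_iff, contractEdge_adj, contractEdge_adj]
        have h1 : (⟨i.castSucc, hlast i⟩ : {x : Fin (H.1 + 1) // x ≠ Fin.last H.1}) =
            ⟨j.castSucc, hlast j⟩ ↔ e i = e j := by
          rw [Subtype.mk.injEq, Fin.castSucc_inj, e.injective.eq_iff]
        have h2 : i.castSucc = i0.castSucc ↔ ((e i : {x : V // x ≠ v}) : V) = u := by
          rw [Fin.castSucc_inj, heu i]
        have h3 : j.castSucc = i0.castSucc ↔ ((e j : {x : V // x ≠ v}) : V) = u := by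
          rw [Fin.castSucc_inj, heu j]
        simp only [hJ'adj, hgc, hgl]
        rw [Ne, Ne, h1]
        rw [h2, h3]
      have hmem : (⟨H.1 + 1, J'⟩ : Σ m : ℕ, SimpleGraph (Fin m)) ∈ FreeSplitFam ℋ := by
        constructor
        · intro K hK
          rintro ⟨k⟩
          exact hfree K hK ⟨(SimpleGraph.Embedding.comap gE G).comp k⟩
        · refine ⟨i0.castSucc, Fin.last H.1, ?_, H, hH, iso⟩
          rw [hJ'adj, hgc, hgl, hi0]
          exact huv
      exact h ⟨H.1 + 1, J'⟩ hmem ⟨SimpleGraph.Embedding.comap gE G⟩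
    · push_neg at hu
      refine hfree H hH ⟨⟨⟨fun i => ((e i : {x : V // x ≠ v}) : V),
        fun i j hij => e.injective (Subtype.ext hij)⟩, ?_⟩⟩
      intro i j
      show G.Adj _ _ ↔ _
      have key := (e.map_adj_iff (v := i) (w := j))
      rw [contractEdge_adj] at key
      constructor
      · intro hG
        refine key.mp ⟨fun hh => hG.ne (congrArg Subtype.val hh), Or.inl hG⟩
      · intro hH'
        rcases (key.mpr hH').2 with h1 | ⟨h1, _⟩ | ⟨h1, _⟩
        · exact h1
        · exact absurd h1 (hu i)
        · exact absurd h1 (hu j)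
end

section
/- Let G be a finite simple graph and v a vertex of G with deg(v) = 1. Then no graph in splitting(G,v) is G-free-split; in particular every graph in splitting(G,v) contains an induced subgraph isomorphic to G. -/
open SimpleGraph

/-- `J` is `G`-free-split (for a single graph `G`): `J` is `G`-free (no induced
subgraph of `J` is isomorphic to `G`) and some `J`-contraction is isomorphic to `G`. -/
def IsFreeSplitOf {A B : Type*} (J : SimpleGraph A) (G : SimpleGraph B) : Prop :=
  (¬ Nonempty (G ↪g J)) ∧ ∃ a b, J.Adj a b ∧ Nonempty (G ≃g J.contractEdge a b)

/-- `splitting(H, v, U, W)`: delete the vertex `v` of `H` and add two new adjacent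
vertices `u := Sum.inl v` and `w := Sum.inr ()` with `N(u) = U ∪ {w}` and
`N(w) = W ∪ {u}`. -/
def splitGraph {V : Type*} (H : SimpleGraph V) (v : V) (U W : Set V) :
    SimpleGraph (V ⊕ Unit) :=
  SimpleGraph.fromRel fun a b =>
    match a, b with
    | Sum.inl x, Sum.inl y => (H.Adj x y ∧ x ≠ v ∧ y ≠ v) ∨ (x = v ∧ y ∈ U)
    | Sum.inl x, Sum.inr _ => x ∈ W ∨ x = v
    | Sum.inr _, _ => False

/-- If `deg(v) = 1`, then no graph in `splitting(G, v)` is `G`-free-split; in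
particular every graph in `splitting(G, v)` contains an induced copy of `G`. -/
theorem stmt6 {V : Type*} [Fintype V] (G : SimpleGraph V) (v : V)
    (hdeg : (G.neighborSet v).ncard = 1) (U W : Set V)
    (hUW : U ∪ W = G.neighborSet v) :
    ¬ IsFreeSplitOf (splitGraph G v U W) G ∧ Nonempty (G ↪g splitGraph G v U W) := by
  classical
  obtain ⟨n, hn⟩ := Set.ncard_eq_one.mp hdeg
  have hadj : G.Adj v n := by
    rw [← SimpleGraph.mem_neighborSet, hn]; exact rfl
  have hnv : n ≠ v := hadj.ne'
  have hU : U ⊆ {n} := by rw [← hn, ← hUW]; exact Set.subset_union_left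
  have hW : W ⊆ {n} := by rw [← hn, ← hUW]; exact Set.subset_union_right
  have hxv : ∀ x, G.Adj x v ↔ x = n := fun x => by
    rw [SimpleGraph.adj_comm, ← SimpleGraph.mem_neighborSet, hn, Set.mem_singleton_iff]
  have hemb : Nonempty (G ↪g splitGraph G v U W) := by
    by_cases hWn : n ∈ W
    · have hbW : ∀ b, b ∈ W ↔ b = n := fun b => ⟨fun h => hW h, fun h => h ▸ hWn⟩
      refine ⟨⟨⟨fun x => if x = v then Sum.inr () else Sum.inl x, ?_⟩, ?_⟩⟩
      · intro a b h
        by_cases ha : a = v <;> by_cases hb : b = v <;>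
          simp [ha, hb] at h <;> simp [ha, hb, h]
      · intro a b
        by_cases ha : a = v <;> by_cases hb : b = v
        · subst ha; subst hb; simp [splitGraph]
        · subst ha
          change (splitGraph G a U W).Adj (if a = a then Sum.inr () else Sum.inl a) (if b = a then Sum.inr () else Sum.inl b) ↔ G.Adj a b
          rw [if_pos rfl, if_neg hb]
          simp only [splitGraph, SimpleGraph.fromRel_adj]
          constructor
          · rintro ⟨-, h⟩
            have hbn : b ∈ W := by
              rcases h with h | h
              · exact h.elim
              · exact h.resolve_right hb
            exact ((hxv b).mpr ((hbW b).mp hbn)).symm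
          · intro h
            exact ⟨by simp, Or.inr (Or.inl ((hbW b).mpr ((hxv b).mp h.symm)))⟩
        · subst hb
          change (splitGraph G b U W).Adj (if a = b then Sum.inr () else Sum.inl a) (if b = b then Sum.inr () else Sum.inl b) ↔ G.Adj a b
          rw [if_pos rfl, if_neg ha]
          simp only [splitGraph, SimpleGraph.fromRel_adj]
          constructor
          · rintro ⟨-, h⟩
            have han : a ∈ W := by
              rcases h with h | h
              · exact h.resolve_right ha
              · exact h.elim
            exact (hxv a).mpr ((hbW a).mp han)
          · intro h
            exact ⟨by simp, Or.inl (Or.inl ((hbW a).mpr ((hxv a).mp h)))⟩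
        · change (splitGraph G v U W).Adj (if a = v then Sum.inr () else Sum.inl a) (if b = v then Sum.inr () else Sum.inl b) ↔ G.Adj a b
          rw [if_neg ha, if_neg hb]
          simp only [splitGraph, SimpleGraph.fromRel_adj]
          constructor
          · rintro ⟨-, h⟩
            rcases h with (⟨h, -⟩ | ⟨h, -⟩) | (⟨h, -⟩ | ⟨h, -⟩)
            · exact h
            · exact absurd h ha
            · exact h.symm
            · exact absurd h hb
          · intro h
            exact ⟨by simpa using h.ne, Or.inl (Or.inl ⟨h, ha, hb⟩)⟩
    · have hUn : n ∈ U := by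
        have hmem : n ∈ U ∪ W := by rw [hUW, hn]; exact rfl
        exact hmem.resolve_right hWn
      have hbU : ∀ b, b ∈ U ↔ b = n := fun b => ⟨fun h => hU h, fun h => h ▸ hUn⟩
      refine ⟨⟨⟨Sum.inl, fun a b h => by simpa using h⟩, ?_⟩⟩
      intro a b
      simp only [Function.Embedding.coeFn_mk, splitGraph, SimpleGraph.fromRel_adj]
      by_cases ha : a = v <;> by_cases hb : b = v
      · subst ha; subst hb; simp
      · subst ha
        constructor
        · rintro ⟨-, h⟩
          have hbn : b ∈ U := by
            rcases h with (⟨h, he, -⟩ | ⟨-, h⟩) | (⟨h, -, he⟩ | ⟨h, -⟩)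
            · exact absurd rfl he
            · exact h
            · exact absurd rfl he
            · exact absurd h hb
          exact ((hxv b).mpr ((hbU b).mp hbn)).symm
        · intro h
          refine ⟨by simpa using (Ne.symm hb), Or.inl (Or.inr ⟨rfl, (hbU b).mpr ((hxv b).mp h.symm)⟩)⟩
      · subst hb
        constructor
        · rintro ⟨-, h⟩
          have han : a ∈ U := by
            rcases h with (⟨h, -, he⟩ | ⟨h, -⟩) | (⟨h, he, -⟩ | ⟨-, h⟩)
            · exact absurd rfl he
            · exact absurd h ha
            · exact absurd rfl he
            · exact h
          exact (hxv a).mpr ((hbU a).mp han)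
        · intro h
          refine ⟨by simpa using ha, Or.inr (Or.inr ⟨rfl, (hbU a).mpr ((hxv a).mp h)⟩)⟩
      · constructor
        · rintro ⟨-, h⟩
          rcases h with (⟨h, -⟩ | ⟨h, -⟩) | (⟨h, -⟩ | ⟨h, -⟩)
          · exact h
          · exact absurd h ha
          · exact h.symm
          · exact absurd h hb
        · intro h
          exact ⟨by simpa using h.ne, Or.inl (Or.inl ⟨h, ha, hb⟩)⟩
  exact ⟨fun h => h.1 hemb, hemb⟩
end

section
/- If G is a path P_n, then no graph in splitting(G) is G-free-split; equivalently, every graph in splitting(P_n) contains an induced subgraph isomorphic to P_n. -/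
open SimpleGraph

-- helper lemmas
lemma split_adj_ll {V : Type*} (H : SimpleGraph V) (v : V) (U W : Set V) (x y : V) :
    (splitGraph H v U W).Adj (Sum.inl x) (Sum.inl y) ↔
      x ≠ y ∧ ((H.Adj x y ∧ x ≠ v ∧ y ≠ v) ∨ (x = v ∧ y ∈ U) ∨ (y = v ∧ x ∈ U)) := by
  simp only [splitGraph, fromRel_adj, ne_eq, Sum.inl.injEq]
  constructor
  · rintro ⟨h1, h2 | h2⟩
    · exact ⟨h1, by tauto⟩
    · rcases h2 with ⟨h3, h4, h5⟩ | h3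
      · exact ⟨h1, Or.inl ⟨h3.symm, h5, h4⟩⟩
      · exact ⟨h1, by tauto⟩
  · rintro ⟨h1, h2⟩
    refine ⟨h1, ?_⟩
    rcases h2 with h | h | h
    · tauto
    · tauto
    · exact Or.inr (Or.inr h)

lemma split_adj_lr {V : Type*} (H : SimpleGraph V) (v : V) (U W : Set V) (x : V) (t : Unit) :
    (splitGraph H v U W).Adj (Sum.inl x) (Sum.inr t) ↔ x ∈ W ∨ x = v := by
  simp [splitGraph, fromRel_adj]

lemma split_adj_rl {V : Type*} (H : SimpleGraph V) (v : V) (U W : Set V) (x : V) (t : Unit) :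
    (splitGraph H v U W).Adj (Sum.inr t) (Sum.inl x) ↔ x ∈ W ∨ x = v := by
  simp [splitGraph, fromRel_adj]

lemma split_adj_rr {V : Type*} (H : SimpleGraph V) (v : V) (U W : Set V) (t s : Unit) :
    ¬ (splitGraph H v U W).Adj (Sum.inr t) (Sum.inr s) := by
  simp [splitGraph, fromRel_adj]

/-- Map for the case `U = {v-1}`, `W = {v+1}`. -/
def fA (n : ℕ) (v : Fin n) (i : Fin n) : Fin n ⊕ Unit :=
  if i.val ≤ v.val then Sum.inl i
  else if i.val = v.val + 1 then Sum.inr ()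
  else Sum.inl ⟨i.val - 1, lt_of_le_of_lt (Nat.sub_le _ _) i.isLt⟩

/-- Map for the case `U = {v+1}`, `W = {v-1}`. -/
def fB (n : ℕ) (v : Fin n) (i : Fin n) : Fin n ⊕ Unit :=
  if i.val < v.val then Sum.inl i
  else if i.val = v.val then Sum.inr ()
  else Sum.inl ⟨i.val - 1, lt_of_le_of_lt (Nat.sub_le _ _) i.isLt⟩

def fC (n : ℕ) (v : Fin n) (i : Fin n) : Fin n ⊕ Unit :=
  if i = v then Sum.inr () else Sum.inl i

lemma fC_self (n : ℕ) (v : Fin n) : fC n v v = Sum.inr () := by simp [fC]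

lemma fC_ne (n : ℕ) (v : Fin n) {i : Fin n} (h : i ≠ v) : fC n v i = Sum.inl i := by
  simp [fC, h]

theorem key (n : ℕ) (v : Fin n) (U W : Set (Fin n))
    (hUW : U ∪ W = (pathGraph n).neighborSet v) :
    Nonempty (pathGraph n ↪g splitGraph (pathGraph n) v U W) := by
  have hmem : ∀ x, (x ∈ U ∨ x ∈ W) ↔ (pathGraph n).Adj v x := by
    intro x
    rw [Set.ext_iff] at hUW
    simpa [Set.mem_union] using hUW x
  by_cases hU : ∀ x, (pathGraph n).Adj v x → x ∈ U
  · -- embedding via Sum.inl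
    have hUiff : ∀ x, x ∈ U ↔ (pathGraph n).Adj v x := by
      intro x
      exact ⟨fun h => (hmem x).mp (Or.inl h), hU x⟩
    refine ⟨⟨⟨Sum.inl, fun a b h => by simpa using h⟩, ?_⟩⟩
    intro a b
    show (splitGraph (pathGraph n) v U W).Adj (Sum.inl a) (Sum.inl b) ↔ (pathGraph n).Adj a b
    simp only [Function.Embedding.coeFn_mk, split_adj_ll, hUiff, pathGraph_adj, ne_eq,
      Fin.ext_iff]
    omega
  by_cases hW : ∀ x, (pathGraph n).Adj v x → x ∈ W
  · -- embedding via Sum.inl except v ↦ inr ()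
    have hWiff : ∀ x, x ∈ W ↔ (pathGraph n).Adj v x := by
      intro x
      exact ⟨fun h => (hmem x).mp (Or.inr h), hW x⟩
    refine ⟨⟨⟨fC n v, ?_⟩, ?_⟩⟩
    · intro a b h
      by_cases ha : a = v <;> by_cases hb : b = v
      · rw [ha, hb]
      · rw [ha, fC_self, fC_ne n v hb] at h; exact nomatch h
      · rw [hb, fC_self, fC_ne n v ha] at h; exact nomatch h.symm
      · rw [fC_ne n v ha, fC_ne n v hb] at h; exact Sum.inl.inj h
    · intro a b
      show (splitGraph (pathGraph n) v U W).Adj (fC n v a) (fC n v b) ↔ (pathGraph n).Adj a b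
      by_cases ha : a = v <;> by_cases hb : b = v
      · subst ha; subst hb
        simp only [Function.Embedding.coeFn_mk, fC_self]
        exact iff_of_false (split_adj_rr _ _ _ _ _ _) (SimpleGraph.irrefl _)
      · subst ha
        simp only [Function.Embedding.coeFn_mk, fC_self, fC_ne n a hb, split_adj_rl, hWiff]
        constructor
        · rintro (h | rfl)
          · exact h
          · exact absurd rfl hb
        · exact Or.inl
      · subst hb
        simp only [Function.Embedding.coeFn_mk, fC_self, fC_ne n b ha, split_adj_lr, hWiff]
        rw [SimpleGraph.adj_comm]
        constructor
        · rintro (h | rfl)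
          · exact h
          · exact absurd rfl ha
        · exact Or.inl
      · simp only [Function.Embedding.coeFn_mk, fC_ne n v ha, fC_ne n v hb, split_adj_ll, ne_eq]
        constructor
        · rintro ⟨h1, h | h | h⟩
          · exact h.1
          · exact absurd h.1 ha
          · exact absurd h.1 hb
        · intro h
          exact ⟨h.ne, Or.inl ⟨h, ha, hb⟩⟩
  · -- mixed case
    push_neg at hU hW
    obtain ⟨q, hqadj, hqU⟩ := hU
    obtain ⟨p, hpadj, hpW⟩ := hW
    have hqW : q ∈ W := ((hmem q).mpr hqadj).resolve_left hqU
    have hpU : p ∈ U := ((hmem p).mpr hpadj).resolve_right hpW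
    have hpq : p.val ≠ q.val := by
      intro h
      have : p = q := Fin.ext h
      exact hqU (this ▸ hpU)
    rw [pathGraph_adj] at hpadj hqadj
    have hvn := v.isLt
    have hpn := p.isLt
    have hqn := q.isLt
    -- either p = v-1, q = v+1  (U = {v-1}, W = {v+1}) -> use fA
    -- or p = v+1, q = v-1 (U = {v+1}, W = {v-1}) -> use fB
    rcases hpadj with hp | hp
    · -- v + 1 = p, so p = v+1 ∈ U, q = v-1 ∈ W : case fB
      have hq : q.val + 1 = v.val := by omega
      have hU' : ∀ x, x ∈ U ↔ x.val = v.val + 1 := by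
        intro x
        constructor
        · intro hx
          have := ((hmem x).mp (Or.inl hx))
          rw [pathGraph_adj] at this
          rcases this with h | h
          · omega
          · exact absurd (Fin.ext (show x.val = q.val by omega) ▸ hx) (by
              intro hc; exact hqU (by exact_mod_cast hc))
        · intro hx
          have : x = p := Fin.ext (by omega)
          exact this ▸ hpU
      have hW' : ∀ x, x ∈ W ↔ x.val + 1 = v.val := by
        intro x
        constructor
        · intro hx
          have := ((hmem x).mp (Or.inr hx))
          rw [pathGraph_adj] at this
          rcases this with h | h
          · exact absurd (Fin.ext (show x.val = p.val by omega) ▸ hx) (by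
              intro hc; exact hpW (by exact_mod_cast hc))
          · omega
        · intro hx
          have : x = q := Fin.ext (by omega)
          exact this ▸ hqW
      refine ⟨⟨⟨fB n v, ?_⟩, ?_⟩⟩
      · intro a b h
        have ha := a.isLt
        have hb := b.isLt
        apply Fin.ext
        unfold fB at h
        split_ifs at h <;>
          first
          | exact Sum.noConfusion h
          | exact congrArg Fin.val (Sum.inl.inj h)
          | (have h2 : a.val = b.val - 1 := congrArg Fin.val (Sum.inl.inj h); omega)
          | (have h2 : a.val - 1 = b.val := congrArg Fin.val (Sum.inl.inj h); omega)
          | (have h2 : a.val - 1 = b.val - 1 := congrArg Fin.val (Sum.inl.inj h); omega)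
          | omega
      · intro a b
        have ha := a.isLt
        have hb := b.isLt
        show (splitGraph (pathGraph n) v U W).Adj (fB n v a) (fB n v b) ↔ (pathGraph n).Adj a b
        simp only [Function.Embedding.coeFn_mk, fB]
        split_ifs <;>
          simp only [split_adj_ll, split_adj_lr, split_adj_rl, split_adj_rr, hU', hW',
            pathGraph_adj, ne_eq, Fin.ext_iff, Fin.val_mk, iff_false, false_iff, iff_true,
            true_iff, not_false_eq_true] <;>
          omega
    · -- p + 1 = v, so p = v-1 ∈ U, q = v+1 ∈ W : case fA
      have hq : q.val = v.val + 1 := by omega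
      have hU' : ∀ x, x ∈ U ↔ x.val + 1 = v.val := by
        intro x
        constructor
        · intro hx
          have := ((hmem x).mp (Or.inl hx))
          rw [pathGraph_adj] at this
          rcases this with h | h
          · exact absurd (Fin.ext (show x.val = q.val by omega) ▸ hx) (by
              intro hc; exact hqU (by exact_mod_cast hc))
          · omega
        · intro hx
          have : x = p := Fin.ext (by omega)
          exact this ▸ hpU
      have hW' : ∀ x, x ∈ W ↔ x.val = v.val + 1 := by
        intro x
        constructor
        · intro hx
          have := ((hmem x).mp (Or.inr hx))
          rw [pathGraph_adj] at this
          rcases this with h | h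
          · omega
          · exact absurd (Fin.ext (show x.val = p.val by omega) ▸ hx) (by
              intro hc; exact hpW (by exact_mod_cast hc))
        · intro hx
          have : x = q := Fin.ext (by omega)
          exact this ▸ hqW
      refine ⟨⟨⟨fA n v, ?_⟩, ?_⟩⟩
      · intro a b h
        have ha := a.isLt
        have hb := b.isLt
        apply Fin.ext
        unfold fA at h
        split_ifs at h <;>
          first
          | exact Sum.noConfusion h
          | exact congrArg Fin.val (Sum.inl.inj h)
          | (have h2 : a.val = b.val - 1 := congrArg Fin.val (Sum.inl.inj h); omega)
          | (have h2 : a.val - 1 = b.val := congrArg Fin.val (Sum.inl.inj h); omega)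
          | (have h2 : a.val - 1 = b.val - 1 := congrArg Fin.val (Sum.inl.inj h); omega)
          | omega
      · intro a b
        have ha := a.isLt
        have hb := b.isLt
        show (splitGraph (pathGraph n) v U W).Adj (fA n v a) (fA n v b) ↔ (pathGraph n).Adj a b
        simp only [Function.Embedding.coeFn_mk, fA]
        split_ifs <;>
          simp only [split_adj_ll, split_adj_lr, split_adj_rl, split_adj_rr, hU', hW',
            pathGraph_adj, ne_eq, Fin.ext_iff, Fin.val_mk, iff_false, false_iff, iff_true,
            true_iff, not_false_eq_true] <;>
          omega

/-- No graph in `splitting(P_n)` is `P_n`-free-split; equivalently, every graph in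
`splitting(P_n)` contains an induced subgraph isomorphic to `P_n`. -/
theorem stmt7 (n : ℕ) (v : Fin n) (U W : Set (Fin n))
    (hUW : U ∪ W = (pathGraph n).neighborSet v) :
    ¬ IsFreeSplitOf (splitGraph (pathGraph n) v U W) (pathGraph n) ∧
    Nonempty (pathGraph n ↪g splitGraph (pathGraph n) v U W) := by
  have h := key n v U W hUW
  exact ⟨fun hfs => hfs.1 h, h⟩
end

section
/- For every integer n ≥ 3, a graph is C_n-free-split if and only if it is isomorphic to the cycle C_{n+1}. -/
open SimpleGraph

lemma mod_two_cases (a m : ℕ) (h : a < 2*m) : (a < m ∧ a % m = a) ∨ (m ≤ a ∧ a % m = a - m) := by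
  rcases Nat.lt_or_ge a m with h1 | h1
  · exact Or.inl ⟨h1, Nat.mod_eq_of_lt h1⟩
  · exact Or.inr ⟨h1, by rw [Nat.mod_eq_sub_mod h1, Nat.mod_eq_of_lt (by omega)]⟩

lemma cycle_adj_val {m : ℕ} (i j : Fin (m+2)) :
    (cycleGraph (m+2)).Adj i j ↔ (i.val + 1 = j.val ∨ j.val + 1 = i.val ∨
      (i.val = 0 ∧ j.val = m+1) ∨ (j.val = 0 ∧ i.val = m+1)) := by
  rw [cycleGraph_adj, Fin.ext_iff, Fin.ext_iff, Fin.sub_def, Fin.sub_def]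
  simp only [Fin.val_one]
  have hi := i.isLt
  have hj := j.isLt
  have h1 := mod_two_cases ((m+2) - j.val + i.val) (m+2) (by omega)
  have h2 := mod_two_cases ((m+2) - i.val + j.val) (m+2) (by omega)
  rcases h1 with ⟨hc1, h1⟩ | ⟨hc1, h1⟩ <;> rcases h2 with ⟨hc2, h2⟩ | ⟨hc2, h2⟩ <;>
    rw [h1, h2] <;> omega

lemma cycle_adj_val' {N : ℕ} (hN : 2 ≤ N) (i j : Fin N) :
    (cycleGraph N).Adj i j ↔ (i.val + 1 = j.val ∨ j.val + 1 = i.val ∨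
      (i.val = 0 ∧ j.val = N-1) ∨ (j.val = 0 ∧ i.val = N-1)) := by
  obtain ⟨m, rfl⟩ : ∃ m, N = m + 2 := ⟨N - 2, by omega⟩
  simpa using cycle_adj_val i j

lemma contract_adj {V : Type*} (G : SimpleGraph V) (u v : V) (x y : {x : V // x ≠ v}) :
    (G.contractEdge u v).Adj x y ↔ x.1 ≠ y.1 ∧
      (G.Adj x.1 y.1 ∨ (x.1 = u ∧ G.Adj v y.1) ∨ (y.1 = u ∧ G.Adj v x.1)) := by
  simp only [SimpleGraph.contractEdge, fromRel_adj, ne_eq, Subtype.ext_iff]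
  have := G.adj_comm x.1 y.1
  tauto


def cycRot {N : ℕ} (k : Fin (N+1)) : cycleGraph (N+1) ≃g cycleGraph (N+1) where
  toEquiv := Equiv.addRight k
  map_rel_iff' := by
    intro x y
    simp only [Equiv.coe_addRight]
    rw [cycleGraph_adj', cycleGraph_adj', add_sub_add_right_eq_sub, add_sub_add_right_eq_sub]

lemma cyc_neg_adj {N : ℕ} (i j : Fin (N+1)) :
    (cycleGraph (N+1)).Adj (-i) (-j) ↔ (cycleGraph (N+1)).Adj i j := by
  rw [cycleGraph_adj', cycleGraph_adj', neg_sub_neg, neg_sub_neg]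
  exact or_comm

lemma fin_val_neg {m : ℕ} (j : Fin (m+3)) (hj : j.val ≠ 0) : (-j).val = (m+3) - j.val := by
  rw [Fin.neg_def]
  exact Nat.mod_eq_of_lt (by have := j.isLt; omega)

lemma build_iso {V : Type*} {G : SimpleGraph V} {m : ℕ} {a b : V} (hab : G.Adj a b)
    (f : Fin (m+3) → V)
    (hinj : Function.Injective f)
    (hfb : ∀ i, f i ≠ b)
    (hsurj : ∀ x, x ≠ b → ∃ i, f i = x)
    (hf0 : f 0 = a)
    (hA : ∀ i j : Fin (m+3), i.val ≠ 0 → j.val ≠ 0 →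
        (G.Adj (f i) (f j) ↔ (cycleGraph (m+3)).Adj i j))
    (ha : ∀ j : Fin (m+3), j.val ≠ 0 → (G.Adj a (f j) ↔ j.val = 1))
    (hb : ∀ j : Fin (m+3), j.val ≠ 0 → (G.Adj b (f j) ↔ j.val = m+2)) :
    Nonempty (G ≃g cycleGraph (m+4)) := by
  classical
  set F : Fin (m+4) → V := fun i => if h : i.val < m+3 then f ⟨i.val, h⟩ else b with hF
  have hFval : ∀ (i : Fin (m+4)) (h : i.val < m+3), F i = f ⟨i.val, h⟩ := by
    intro i h; simp only [hF, dif_pos h]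
  have hFb : ∀ (i : Fin (m+4)), ¬ i.val < m+3 → F i = b := by
    intro i h; simp only [hF, dif_neg h]
  have hFinj : Function.Injective F := by
    intro x y hxy
    by_cases hx : x.val < m+3 <;> by_cases hy : y.val < m+3
    · rw [hFval x hx, hFval y hy] at hxy
      have := hinj hxy
      have := congrArg Fin.val this
      exact Fin.ext this
    · rw [hFval x hx, hFb y hy] at hxy; exact absurd hxy (hfb _)
    · rw [hFb x hx, hFval y hy] at hxy; exact absurd hxy.symm (hfb _)
    · have := x.isLt; have := y.isLt; exact Fin.ext (by omega)
  have hFsurj : Function.Surjective F := by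
    intro x
    by_cases hx : x = b
    · exact ⟨Fin.last (m+3), by rw [hFb _ (by simp [Fin.val_last])]; exact hx.symm⟩
    · obtain ⟨i, hi⟩ := hsurj x hx
      refine ⟨⟨i.val, by have := i.isLt; omega⟩, ?_⟩
      rw [hFval _ (by exact i.isLt)]
      simpa using hi
  have hv : ∀ (x : ℕ) (h : x < m+3), ((⟨x, h⟩ : Fin (m+3)) : ℕ) = x := fun _ _ => rfl
  have hcb : ∀ (k : Fin (m+3)), k.val ≠ 0 → (G.Adj (f k) b ↔ k.val = m+2) := by
    intro k hk; rw [G.adj_comm]; exact hb k hk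
  refine ⟨(RelIso.symm ⟨Equiv.ofBijective F ⟨hFinj, hFsurj⟩, ?_⟩ : G ≃g cycleGraph (m+4))⟩
  intro i j
  show G.Adj (F i) (F j) ↔ (cycleGraph (m+4)).Adj i j
  rw [cycle_adj_val' (by omega)]
  have hiLt := i.isLt
  have hjLt := j.isLt
  by_cases hi : i.val < m+3 <;> by_cases hj : j.val < m+3
  · rw [hFval i hi, hFval j hj]
    by_cases hi0 : i.val = 0 <;> by_cases hj0 : j.val = 0
    · have : (⟨i.val, hi⟩ : Fin (m+3)) = ⟨j.val, hj⟩ := by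
        apply Fin.ext
        show i.val = j.val
        omega
      rw [this]
      refine iff_of_false (G.irrefl) (by omega)
    · have : (⟨i.val, hi⟩ : Fin (m+3)) = 0 := Fin.ext (by simpa using hi0)
      rw [this, hf0, ha ⟨j.val, hj⟩ (by simpa using hj0)]
      simp only [hv]
      omega
    · have : (⟨j.val, hj⟩ : Fin (m+3)) = 0 := Fin.ext (by simpa using hj0)
      rw [this, hf0, G.adj_comm, ha ⟨i.val, hi⟩ (by simpa using hi0)]
      simp only [hv]
      omega
    · rw [hA ⟨i.val, hi⟩ ⟨j.val, hj⟩ (by simpa using hi0) (by simpa using hj0),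
        cycle_adj_val' (by omega)]
      simp only [hv]
      omega
  · rw [hFval i hi, hFb j hj]
    by_cases hi0 : i.val = 0
    · have : (⟨i.val, hi⟩ : Fin (m+3)) = 0 := Fin.ext (by simpa using hi0)
      rw [this, hf0]
      simp only [hab, true_iff]
      omega
    · rw [hcb ⟨i.val, hi⟩ (by simpa using hi0)]
      simp only [hv]
      omega
  · rw [hFb i hi, hFval j hj]
    by_cases hj0 : j.val = 0
    · have : (⟨j.val, hj⟩ : Fin (m+3)) = 0 := Fin.ext (by simpa using hj0)
      rw [this, hf0, G.adj_comm]
      simp only [hab, true_iff]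
      omega
    · rw [hb ⟨j.val, hj⟩ (by simpa using hj0)]
      simp only [hv]
      omega
  · rw [hFb i hi, hFb j hj]
    exact iff_of_false (G.irrefl) (by omega)

lemma forward_dir {V : Type*} {G : SimpleGraph V} {m : ℕ}
    (hfree : ¬ Nonempty (cycleGraph (m+3) ↪g G))
    {a b : V} (hab : G.Adj a b) (φ0 : cycleGraph (m+3) ≃g G.contractEdge a b) :
    Nonempty (G ≃g cycleGraph (m+4)) := by
  classical
  have hne : a ≠ b := hab.ne
  set k : Fin (m+3) := φ0.symm ⟨a, hne⟩ with hk
  set φ : cycleGraph (m+3) ≃g G.contractEdge a b := (cycRot (N := m+2) k).trans φ0 with hφ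
  set f : Fin (m+3) → V := fun i => (φ i).1 with hfdef
  have hφ0 : φ 0 = ⟨a, hne⟩ := by
    show φ0 ((cycRot (N := m+2) k) 0) = ⟨a, hne⟩
    have : (cycRot (N := m+2) k) 0 = k := by
      show (0 : Fin (m+3)) + k = k
      exact zero_add k
    rw [this, hk]
    exact φ0.apply_symm_apply _
  have hf0 : f 0 = a := by rw [hfdef]; simp only [hφ0]
  have hfb : ∀ i, f i ≠ b := fun i => (φ i).2
  have hinj : Function.Injective f := by
    intro x y h
    exact φ.toEquiv.injective (Subtype.ext h)
  have hsurj : ∀ x, x ≠ b → ∃ i, f i = x := by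
    intro x hx
    refine ⟨φ.symm ⟨x, hx⟩, ?_⟩
    show (φ (φ.symm ⟨x, hx⟩)).1 = x
    rw [φ.apply_symm_apply]
  have transfer : ∀ i j, (cycleGraph (m+3)).Adj i j ↔ (f i ≠ f j ∧
      (G.Adj (f i) (f j) ∨ (f i = a ∧ G.Adj b (f j)) ∨ (f j = a ∧ G.Adj b (f i)))) := by
    intro i j
    rw [← φ.map_rel_iff, contract_adj]
  have hfa : ∀ i, f i = a ↔ i = 0 := by
    intro i
    constructor
    · intro h; exact hinj (h.trans hf0.symm)
    · intro h; rw [h, hf0]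
  have hA : ∀ i j : Fin (m+3), i.val ≠ 0 → j.val ≠ 0 →
      (G.Adj (f i) (f j) ↔ (cycleGraph (m+3)).Adj i j) := by
    intro i j hi hj
    rw [transfer i j]
    constructor
    · intro h; exact ⟨h.ne, Or.inl h⟩
    · rintro ⟨hne', h | ⟨h, -⟩ | ⟨h, -⟩⟩
      · exact h
      · exact absurd (Fin.ext_iff.mp ((hfa i).mp h)) hi
      · exact absurd (Fin.ext_iff.mp ((hfa j).mp h)) hj
  have hB : ∀ j : Fin (m+3), j.val ≠ 0 →
      ((G.Adj a (f j) ∨ G.Adj b (f j)) ↔ (j.val = 1 ∨ j.val = m+2)) := by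
    intro j hj
    have hne0 : f j ≠ a := fun h => hj (Fin.ext_iff.mp ((hfa j).mp h))
    have h0 : (cycleGraph (m+3)).Adj 0 j ↔ (j.val = 1 ∨ j.val = m+2) := by
      rw [cycle_adj_val' (by omega)]
      have hz : ((0 : Fin (m+3)) : ℕ) = 0 := Fin.val_zero _
      have := j.isLt
      omega
    rw [← h0, transfer 0 j, hf0]
    constructor
    · rintro (h | h)
      · exact ⟨fun he => hne0 he.symm, Or.inl h⟩
      · exact ⟨fun he => hne0 he.symm, Or.inr (Or.inl ⟨rfl, h⟩)⟩
    · rintro ⟨-, h | ⟨-, h⟩ | ⟨h, -⟩⟩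
      · exact Or.inl h
      · exact Or.inr h
      · exact absurd h hne0
  set o1 : Fin (m+3) := ⟨1, by omega⟩ with ho1
  set o2 : Fin (m+3) := ⟨m+2, by omega⟩ with ho2
  have ho1v : o1.val = 1 := rfl
  have ho2v : o2.val = m+2 := rfl
  have hC0 : ∀ j : Fin (m+3), (cycleGraph (m+3)).Adj 0 j ↔ (j.val = 1 ∨ j.val = m+2) := by
    intro j
    rw [cycle_adj_val' (by omega)]
    have hz : ((0 : Fin (m+3)) : ℕ) = 0 := Fin.val_zero _
    have := j.isLt
    omega
  -- no vertex in {a, b} is adjacent to both f o1 and f o2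
  have hnotboth : ∀ c, (c = a ∨ c = b) → G.Adj c (f o1) → G.Adj c (f o2) → False := by
    intro c hc h1 h2
    apply hfree
    set g : Fin (m+3) → V := Function.update f 0 c with hg
    have hg0 : g 0 = c := Function.update_self 0 c f
    have hgn : ∀ j : Fin (m+3), j ≠ 0 → g j = f j := fun j hj => Function.update_of_ne hj c f
    have hcf : ∀ j : Fin (m+3), j ≠ 0 → c ≠ f j := by
      intro j hj he
      rcases hc with rfl | rfl
      · exact hj ((hfa j).mp he.symm)
      · exact hfb j he.symm
    have hginj : Function.Injective g := by
      intro x y h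
      by_cases hx : x = 0 <;> by_cases hy : y = 0
      · rw [hx, hy]
      · rw [hx, hg0] at h; rw [hgn y hy] at h; exact absurd h (hcf y hy)
      · rw [hy, hg0] at h; rw [hgn x hx] at h; exact absurd h.symm (hcf x hx)
      · rw [hgn x hx, hgn y hy] at h; exact hinj h
    refine ⟨⟨⟨g, hginj⟩, ?_⟩⟩
    intro x y
    show G.Adj (g x) (g y) ↔ (cycleGraph (m+3)).Adj x y
    have key : ∀ y : Fin (m+3), y ≠ 0 → (G.Adj c (f y) ↔ (cycleGraph (m+3)).Adj 0 y) := by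
      intro y hy
      rw [hC0 y]
      constructor
      · intro h
        apply (hB y (fun h0 => hy (Fin.ext h0))).mp
        rcases hc with rfl | rfl
        · exact Or.inl h
        · exact Or.inr h
      · rintro (h | h)
        · have : y = o1 := Fin.ext (by rw [ho1v]; exact h)
          rw [this]; exact h1
        · have : y = o2 := Fin.ext (by rw [ho2v]; exact h)
          rw [this]; exact h2
    by_cases hx : x = 0 <;> by_cases hy : y = 0
    · rw [hx, hy]
      exact iff_of_false (by rw [hg0]; exact G.irrefl) (SimpleGraph.irrefl _)
    · rw [hx, hg0, hgn y hy]
      rw [hx] at *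
      exact key y hy
    · rw [hy, hg0, hgn x hx, G.adj_comm, (cycleGraph (m+3)).adj_comm]
      exact key x hx
    · rw [hgn x hx, hgn y hy]
      exact hA x y (fun h0 => hx (Fin.ext h0)) (fun h0 => hy (Fin.ext h0))
  have key1 : G.Adj a (f o1) ∨ G.Adj b (f o1) := (hB o1 (by rw [ho1v]; omega)).mpr (Or.inl ho1v)
  have key2 : G.Adj a (f o2) ∨ G.Adj b (f o2) := (hB o2 (by rw [ho2v]; omega)).mpr (Or.inr ho2v)
  by_cases hA1 : G.Adj a (f o1)
  · have hnA2 : ¬ G.Adj a (f o2) := fun h => hnotboth a (Or.inl rfl) hA1 h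
    have hB2 : G.Adj b (f o2) := key2.resolve_left hnA2
    have hnB1 : ¬ G.Adj b (f o1) := fun h => hnotboth b (Or.inr rfl) h hB2
    have ha' : ∀ j : Fin (m+3), j.val ≠ 0 → (G.Adj a (f j) ↔ j.val = 1) := by
      intro j hj
      constructor
      · intro h
        rcases (hB j hj).mp (Or.inl h) with h1 | h2
        · exact h1
        · exfalso
          apply hnA2
          have he : j = o2 := Fin.ext (by rw [ho2v]; exact h2)
          rwa [he] at h
      · intro h
        have : j = o1 := Fin.ext (by rw [ho1v]; exact h)
        rw [this]; exact hA1
    have hb' : ∀ j : Fin (m+3), j.val ≠ 0 → (G.Adj b (f j) ↔ j.val = m+2) := by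
      intro j hj
      constructor
      · intro h
        rcases (hB j hj).mp (Or.inr h) with h1 | h2
        · exfalso
          apply hnB1
          have he : j = o1 := Fin.ext (by rw [ho1v]; exact h1)
          rwa [he] at h
        · exact h2
      · intro h
        have : j = o2 := Fin.ext (by rw [ho2v]; exact h)
        rw [this]; exact hB2
    exact build_iso hab f hinj hfb hsurj hf0 hA ha' hb'
  · have hB1 : G.Adj b (f o1) := key1.resolve_left hA1
    have hnB2 : ¬ G.Adj b (f o2) := fun h => hnotboth b (Or.inr rfl) hB1 h
    have hA2 : G.Adj a (f o2) := key2.resolve_right hnB2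
    -- reflect: use f' i = f (-i)
    set f' : Fin (m+3) → V := fun i => f (-i) with hf'
    have hnegv : ∀ j : Fin (m+3), j.val ≠ 0 → (-j).val = (m+3) - j.val := fin_val_neg
    have hneg0 : ∀ j : Fin (m+3), j.val ≠ 0 → (-j).val ≠ 0 := by
      intro j hj
      rw [hnegv j hj]
      have := j.isLt
      omega
    have hinj' : Function.Injective f' := hinj.comp neg_injective
    have hfb' : ∀ i, f' i ≠ b := fun i => hfb _
    have hsurj' : ∀ x, x ≠ b → ∃ i, f' i = x := by
      intro x hx
      obtain ⟨i, hi⟩ := hsurj x hx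
      exact ⟨-i, by rw [hf']; simp only [neg_neg]; exact hi⟩
    have hf0' : f' 0 = a := by rw [hf']; simp only [neg_zero]; exact hf0
    have hA' : ∀ i j : Fin (m+3), i.val ≠ 0 → j.val ≠ 0 →
        (G.Adj (f' i) (f' j) ↔ (cycleGraph (m+3)).Adj i j) := by
      intro i j hi hj
      rw [hf']
      rw [hA (-i) (-j) (hneg0 i hi) (hneg0 j hj)]
      exact cyc_neg_adj (N := m+2) i j
    have ha2 : ∀ j : Fin (m+3), j.val ≠ 0 → (G.Adj a (f j) ↔ j.val = m+2) := by
      intro j hj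
      constructor
      · intro h
        rcases (hB j hj).mp (Or.inl h) with h1 | h2
        · exfalso
          apply hA1
          have he : j = o1 := Fin.ext (by rw [ho1v]; exact h1)
          rwa [he] at h
        · exact h2
      · intro h
        have : j = o2 := Fin.ext (by rw [ho2v]; exact h)
        rw [this]; exact hA2
    have hb2 : ∀ j : Fin (m+3), j.val ≠ 0 → (G.Adj b (f j) ↔ j.val = 1) := by
      intro j hj
      constructor
      · intro h
        rcases (hB j hj).mp (Or.inr h) with h1 | h2
        · exact h1
        · exfalso
          apply hnB2
          have he : j = o2 := Fin.ext (by rw [ho2v]; exact h2)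
          rwa [he] at h
      · intro h
        have : j = o1 := Fin.ext (by rw [ho1v]; exact h)
        rw [this]; exact hB1
    have ha' : ∀ j : Fin (m+3), j.val ≠ 0 → (G.Adj a (f' j) ↔ j.val = 1) := by
      intro j hj
      rw [hf', ha2 (-j) (hneg0 j hj), hnegv j hj]
      have := j.isLt
      omega
    have hb' : ∀ j : Fin (m+3), j.val ≠ 0 → (G.Adj b (f' j) ↔ j.val = m+2) := by
      intro j hj
      rw [hf', hb2 (-j) (hneg0 j hj), hnegv j hj]
      have := j.isLt
      omega
    exact build_iso hab f' hinj' hfb' hsurj' hf0' hA' ha' hb'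

lemma no_embed {V : Type*} {G : SimpleGraph V} {m : ℕ}
    (ψ : G ≃g cycleGraph (m+4)) : ¬ Nonempty (cycleGraph (m+3) ↪g G) := by
  rintro ⟨e⟩
  classical
  set e2 : cycleGraph (m+3) ↪g cycleGraph (m+4) := SimpleGraph.Embedding.comp ψ.toEmbedding e with he2
  have hinj : Function.Injective e2 := e2.injective
  set s : Finset (Fin (m+4)) := Finset.univ.image e2 with hs
  have hcard : s.card = m+3 := by
    rw [hs, Finset.card_image_of_injective _ hinj, Finset.card_univ, Fintype.card_fin]
  have hcc : sᶜ.card = 1 := by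
    rw [Finset.card_compl, hcard, Fintype.card_fin]
    omega
  obtain ⟨w, hw⟩ := Finset.card_eq_one.mp hcc
  have hmem : ∀ x : Fin (m+4), x ≠ w → ∃ i, e2 i = x := by
    intro x hx
    have : x ∈ s := by
      by_contra hxs
      have : x ∈ sᶜ := Finset.mem_compl.mpr hxs
      rw [hw, Finset.mem_singleton] at this
      exact hx this
    obtain ⟨i, -, hi⟩ := Finset.mem_image.mp this
    exact ⟨i, hi⟩
  have hwn : ∀ i, e2 i ≠ w := by
    intro i h
    have hws : w ∈ sᶜ := by rw [hw]; exact Finset.mem_singleton_self w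
    have : w ∈ s := by
      rw [hs]
      exact Finset.mem_image.mpr ⟨i, Finset.mem_univ i, h⟩
    exact (Finset.mem_compl.mp hws) this
  have hw1 : w + 1 ≠ w := by
    intro h
    have h2 : (1 : Fin (m+4)) = 0 := by
      have := congrArg (fun x => x - w) h
      simpa [add_sub_cancel_right, sub_self] using this
    have := congrArg Fin.val h2
    simp at this
  obtain ⟨i, hi⟩ := hmem (w+1) hw1
  -- adjacency helpers in cycleGraph (m+3)
  have hadjsucc : ∀ x : Fin (m+3), (cycleGraph (m+3)).Adj x (x+1) := by
    intro x
    rw [cycle_adj_val' (by omega)]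
    have hvx := x.isLt
    have hv1 : ((1 : Fin (m+3)) : ℕ) = 1 := by
      have : ((1 : Fin (m+2+1)) : ℕ) = 1 % (m+3) := Fin.val_one' _
      rw [Nat.mod_eq_of_lt (by omega)] at this
      exact this
    have hadd : ((x + 1 : Fin (m+3)) : ℕ) = (x.val + 1) % (m+3) := by
      rw [Fin.val_add, hv1]
    rcases mod_two_cases (x.val + 1) (m+3) (by omega) with ⟨h1, h2⟩ | ⟨h1, h2⟩ <;>
      rw [h2] at hadd <;> omega
  have hadj1 : (cycleGraph (m+4)).Adj (w+1) (e2 (i+1)) := by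
    rw [← hi]
    exact e2.map_rel_iff.mpr (hadjsucc i)
  have hadj2 : (cycleGraph (m+4)).Adj (w+1) (e2 (i-1)) := by
    rw [← hi]
    have : (cycleGraph (m+3)).Adj (i-1) i := by
      have := hadjsucc (i-1)
      rwa [sub_add_cancel] at this
    exact e2.map_rel_iff.mpr this.symm
  -- neighbors of w+1 are w and w+2
  have hnbr : ∀ x : Fin (m+4), (cycleGraph (m+4)).Adj (w+1) x → x = w ∨ x = w + 2 := by
    intro x hx
    rw [cycleGraph_adj (n := m+2)] at hx
    rcases hx with hx | hx
    · left
      have : w + 1 = 1 + x := sub_eq_iff_eq_add.mp hx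
      rw [add_comm 1 x] at this
      exact (add_left_injective 1 this).symm
    · right
      have : x = 1 + (w + 1) := sub_eq_iff_eq_add.mp hx
      rw [this]; grind
  have hd : i + 1 ≠ i - 1 := by
    intro h
    have h2 : (1 : Fin (m+3)) = -1 := by
      rw [sub_eq_add_neg] at h
      exact add_left_cancel h
    have hv1 : ((1 : Fin (m+3)) : ℕ) = 1 := by
      have : ((1 : Fin (m+2+1)) : ℕ) = 1 % (m+3) := Fin.val_one' _
      rw [Nat.mod_eq_of_lt (by omega)] at this
      exact this
    have hvn : ((-1 : Fin (m+3)) : ℕ) = m+2 := by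
      rw [fin_val_neg 1 (by rw [hv1]; omega), hv1]
      omega
    rw [h2, hvn] at hv1
    omega
  rcases hnbr _ hadj1 with h1 | h1
  · exact hwn _ h1
  · rcases hnbr _ hadj2 with h2 | h2
    · exact hwn _ h2
    · exact hd (hinj (h1.trans h2.symm))

lemma backward_dir {V : Type*} {G : SimpleGraph V} {m : ℕ}
    (ψ : G ≃g cycleGraph (m+4)) : IsFreeSplitOf G (cycleGraph (m+3)) := by
  classical
  constructor
  · exact no_embed ψ
  · set a : V := ψ.symm 0 with ha
    set b : V := ψ.symm (Fin.last (m+3)) with hb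
    have hlast : (cycleGraph (m+4)).Adj 0 (Fin.last (m+3)) := by
      rw [cycle_adj_val' (by omega)]
      have h0 : ((0 : Fin (m+4)) : ℕ) = 0 := Fin.val_zero _
      have hl : ((Fin.last (m+3)) : ℕ) = m+3 := Fin.val_last _
      omega
    have hab : G.Adj a b := ψ.symm.map_rel_iff.mpr hlast
    refine ⟨a, b, hab, ?_⟩
    have hsne : ∀ i : Fin (m+3), ψ.symm i.castSucc ≠ b := by
      intro i h
      rw [hb] at h
      have : i.castSucc = Fin.last (m+3) := ψ.symm.toEquiv.injective h
      exact absurd this (Fin.castSucc_lt_last i).ne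
    set g : Fin (m+3) → {x : V // x ≠ b} := fun i => ⟨ψ.symm i.castSucc, hsne i⟩ with hg
    have hginj : Function.Injective g := by
      intro x y h
      have := Subtype.ext_iff.mp h
      have := ψ.symm.toEquiv.injective this
      exact Fin.castSucc_injective _ this
    have hgsurj : Function.Surjective g := by
      rintro ⟨x, hx⟩
      have hxl : ψ x ≠ Fin.last (m+3) := by
        intro h
        apply hx
        rw [hb, ← h]
        exact (ψ.toEquiv.symm_apply_apply x).symm
      refine ⟨(ψ x).castPred hxl, ?_⟩
      apply Subtype.ext
      show ψ.symm ((ψ x).castPred hxl).castSucc = x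
      rw [Fin.castSucc_castPred]
      exact ψ.toEquiv.symm_apply_apply x
    refine ⟨⟨Equiv.ofBijective g ⟨hginj, hgsurj⟩, ?_⟩⟩
    intro i j
    show (G.contractEdge a b).Adj (g i) (g j) ↔ (cycleGraph (m+3)).Adj i j
    rw [contract_adj]
    have h1 : ((g i).1 = a) ↔ i.val = 0 := by
      constructor
      · intro h
        have h' : ψ.symm i.castSucc = ψ.symm 0 := h
        have h'' := ψ.symm.toEquiv.injective h'
        have := congrArg Fin.val h''
        simpa using this
      · intro h
        show ψ.symm i.castSucc = ψ.symm 0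
        have : i.castSucc = (0 : Fin (m+4)) := Fin.ext (by simpa using h)
        rw [this]
    have h2 : ((g j).1 = a) ↔ j.val = 0 := by
      constructor
      · intro h
        have h' : ψ.symm j.castSucc = ψ.symm 0 := h
        have h'' := ψ.symm.toEquiv.injective h'
        have := congrArg Fin.val h''
        simpa using this
      · intro h
        show ψ.symm j.castSucc = ψ.symm 0
        have : j.castSucc = (0 : Fin (m+4)) := Fin.ext (by simpa using h)
        rw [this]
    have h3 : G.Adj (g i).1 (g j).1 ↔ (cycleGraph (m+4)).Adj i.castSucc j.castSucc :=
      ψ.symm.map_rel_iff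
    have h4 : G.Adj b (g j).1 ↔ (cycleGraph (m+4)).Adj (Fin.last (m+3)) j.castSucc :=
      ψ.symm.map_rel_iff
    have h5 : G.Adj b (g i).1 ↔ (cycleGraph (m+4)).Adj (Fin.last (m+3)) i.castSucc :=
      ψ.symm.map_rel_iff
    have h6 : ((g i).1 ≠ (g j).1) ↔ i.val ≠ j.val := by
      constructor
      · intro h hv
        exact h (congrArg (fun z => (g z).1) (Fin.ext hv))
      · intro h he
        exact h (congrArg Fin.val (hginj (Subtype.ext he)))
    rw [h3, h4, h5, h6]
    rw [cycle_adj_val' (by omega), cycle_adj_val' (by omega), cycle_adj_val' (by omega),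
      cycle_adj_val' (by omega)]
    simp only [Fin.coe_castSucc, Fin.val_last]
    constructor
    · rintro ⟨hnej, hor⟩
      have hi := i.isLt
      have hj := j.isLt
      rcases hor with h | ⟨hi0, h⟩ | ⟨hj0, h⟩
      · omega
      · rw [h1] at hi0; omega
      · rw [h2] at hj0; omega
    · intro h
      have hi := i.isLt
      have hj := j.isLt
      refine ⟨by omega, ?_⟩
      rcases h with h | h | ⟨hi0, hj0⟩ | ⟨hj0, hi0⟩
      · exact Or.inl (by omega)
      · exact Or.inl (by omega)
      · exact Or.inr (Or.inl ⟨h1.mpr hi0, by omega⟩)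
      · exact Or.inr (Or.inr ⟨h2.mpr hj0, by omega⟩)


/-- For every `n ≥ 3`, a graph is `C_n`-free-split if and only if it is isomorphic
to the cycle `C_{n+1}`. -/
theorem stmt8 {V : Type*} [Fintype V] (G : SimpleGraph V) (n : ℕ) (hn : 3 ≤ n) :
    IsFreeSplitOf G (cycleGraph n) ↔ Nonempty (G ≃g cycleGraph (n + 1)) := by
  obtain ⟨m, rfl⟩ : ∃ m, n = m + 3 := ⟨n - 3, by omega⟩
  constructor
  · rintro ⟨hfree, a, b, hab, ⟨φ0⟩⟩
    exact forward_dir hfree hab φ0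
  · rintro ⟨ψ⟩
    exact backward_dir (m := m) ψ
end

section
/- Let 𝓗 be a family of finite simple graphs and let G be a critically 𝓗-exist graph. Then for every vertex set S ⊆ V(G) such that G[S] is isomorphic to a member of 𝓗: (1) the set V(G) − S is independent in G, and (2) no vertex of V(G) − S is a corner dominated by a vertex of S. -/
open SimpleGraph

/-- If the induced subgraph on `S` is unaffected by contracting `uv` (with `v ∉ S`),
then `G.induce S` embeds into the contraction. -/
noncomputable def embedContract {V : Type*} (G : SimpleGraph V) (u v : V) (S : Set V)
    (hv : v ∉ S)
    (h : ∀ x ∈ S, ∀ y ∈ S, x ≠ y → x = u → G.Adj v y → G.Adj x y) :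
    G.induce S ↪g G.contractEdge u v where
  toFun := fun x => ⟨x.1, fun e => hv (e ▸ x.2)⟩
  inj' := by
    intro x y hxy
    have := hxy
    simp only [Subtype.mk.injEq] at this
    exact Subtype.ext this
  map_rel_iff' := by
    intro x y
    constructor
    · rintro ⟨hne, hor⟩
      have hne' : (x : V) ≠ y := fun e => hne (Subtype.ext e)
      rcases hor with (hxy | ⟨hxu, hvy⟩) | (hyx | ⟨hyu, hvx⟩)
      · exact hxy
      · exact h x.1 x.2 y.1 y.2 hne' hxu hvy
      · exact hyx.symm
      · exact (h y.1 y.2 x.1 x.2 hne'.symm hyu hvx).symm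
    · intro hadj
      have hadj' : G.Adj x.1 y.1 := hadj
      refine ⟨fun e => hadj'.ne ?_, Or.inl (Or.inl hadj')⟩
      have := congrArg Subtype.val e
      exact this

/-- If `G` is critically `ℋ`-exist, then for every `S ⊆ V(G)` inducing a member of
`ℋ`: (1) `V(G) - S` is independent, and (2) no vertex of `V(G) - S` is a corner
dominated by a vertex of `S` (i.e. `N[a] ⊆ N[b]` fails for `a ∉ S`, `b ∈ S`). -/
theorem stmt9 {V : Type*} [Fintype V] (G : SimpleGraph V) (ℋ : GraphFamily)
    (hexist : ∃ H ∈ ℋ, Nonempty (H.2 ↪g G))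
    (hcrit : AllContractionsFamFree G ℋ)
    (S : Set V) (hS : ∃ H ∈ ℋ, Nonempty (H.2 ≃g G.induce S)) :
    (∀ a ∉ S, ∀ b ∉ S, ¬ G.Adj a b) ∧
    (∀ a ∉ S, ∀ b ∈ S,
      ¬ (insert a (G.neighborSet a) ⊆ insert b (G.neighborSet b))) := by
  obtain ⟨H, hH, ⟨e⟩⟩ := hS
  constructor
  · intro a ha b hb hadj
    have hemb : G.induce S ↪g G.contractEdge a b :=
      embedContract G a b S hb (fun x hx y hy hne hxu _ => absurd (hxu ▸ hx) ha)
    exact hcrit a b hadj H hH ⟨hemb.comp e.toEmbedding⟩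
  · intro a ha b hb hsub
    have hab : G.Adj b a := by
      have : a ∈ insert b (G.neighborSet b) := hsub (Set.mem_insert _ _)
      rcases this with h | h
      · exact absurd (h ▸ hb) ha
      · exact h
    have hemb : G.induce S ↪g G.contractEdge b a := by
      refine embedContract G b a S ha (fun x hx y hy hne hxu hay => ?_)
      have : y ∈ insert b (G.neighborSet b) := hsub (Set.mem_insert_of_mem _ hay)
      rcases this with h | h
      · exact absurd (hxu.trans h.symm) hne
      · exact hxu ▸ h
    exact hcrit b a hab H hH ⟨hemb.comp e.toEmbedding⟩
end

section
/- Let 𝓗 be a family of finite simple graphs, let G be a critically 𝓗-exist graph, and let S ⊆ V(G) be a set inducing a graph isomorphic to a member of 𝓗. Then no vertex v ∈ V(G) − S satisfies any of the following: N(v) consists of exactly one vertex; N(v) consists of exactly two adjacent vertices; N(v) consists of exactly three vertices inducing P_3 or C_3 in G; or v is adjacent to a vertex of degree |V(G)| − 1. -/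
open SimpleGraph

/-- Key lemma: if `v ∉ S` has a neighbour `w` adjacent to all other neighbours of `v`,
then contracting `vw` keeps the subgraph induced by `S` intact, contradicting
criticality. -/
lemma key_lemma {V : Type*} (G : SimpleGraph V) (ℋ : GraphFamily)
    (hcrit : AllContractionsFamFree G ℋ)
    (S : Set V) (hS : ∃ H ∈ ℋ, Nonempty (H.2 ≃g G.induce S))
    (v : V) (hv : v ∉ S) (w : V) (hvw : G.Adj v w)
    (hw : ∀ b, G.Adj v b → b ≠ w → G.Adj w b) : False := by
  obtain ⟨H, hH, ⟨e⟩⟩ := hS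
  refine hcrit w v hvw.symm H hH ⟨⟨⟨fun i => ⟨(e i).1, fun h => hv (h ▸ (e i).2)⟩,
      fun a b hab => e.injective (Subtype.ext (by simpa using congrArg Subtype.val hab))⟩, ?_⟩⟩
  intro a b
  have hadj : G.Adj (e a).1 (e b).1 ↔ H.2.Adj a b := by
    have := e.map_adj_iff (v := a) (w := b)
    simpa [SimpleGraph.comap] using this
  rw [← hadj]
  simp only [SimpleGraph.contractEdge, SimpleGraph.fromRel_adj]
  constructor
  · rintro ⟨hne, h⟩
    have hne' : ((e a : V)) ≠ ((e b : V)) := by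
      intro hh
      exact hne (Subtype.ext hh)
    rcases h with (h | ⟨haw, h⟩) | (h | ⟨hbw, h⟩)
    · exact h
    · rcases eq_or_ne ((e b : V)) w with hbw | hbw
      · exact absurd (haw.trans hbw.symm) hne'
      · exact haw ▸ hw _ h hbw
    · exact h.symm
    · rcases eq_or_ne ((e a : V)) w with haw2 | haw2
      · exact absurd (haw2.trans hbw.symm) hne'
      · exact hbw ▸ (hw _ h haw2).symm
  · intro h
    exact ⟨fun hh => h.ne (by have h2 := congrArg Subtype.val hh; exact h2), Or.inl (Or.inl h)⟩

/-- In a critically `ℋ`-exist graph `G` with `S` inducing a member of `ℋ`, no vertex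
`v ∉ S` has: exactly one neighbour; exactly two adjacent neighbours; exactly three
neighbours inducing `P_3` or `C_3`; or a neighbour of degree `|V(G)| - 1`. -/
theorem stmt10 {V : Type*} [Fintype V] (G : SimpleGraph V) (ℋ : GraphFamily)
    (hexist : ∃ H ∈ ℋ, Nonempty (H.2 ↪g G))
    (hcrit : AllContractionsFamFree G ℋ)
    (S : Set V) (hS : ∃ H ∈ ℋ, Nonempty (H.2 ≃g G.induce S))
    (v : V) (hv : v ∉ S) :
    (¬ ∃ x, G.neighborSet v = {x}) ∧
    (¬ ∃ x y, G.Adj x y ∧ G.neighborSet v = {x, y}) ∧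
    (¬ ∃ x y z, ({x, y, z} : Set V).ncard = 3 ∧ G.neighborSet v = {x, y, z} ∧
      (Nonempty (pathGraph 3 ≃g G.induce {x, y, z}) ∨
        Nonempty (cycleGraph 3 ≃g G.induce {x, y, z}))) ∧
    (¬ ∃ x, G.Adj v x ∧ (G.neighborSet x).ncard = Fintype.card V - 1) := by
  refine ⟨?_, ?_, ?_, ?_⟩
  · rintro ⟨x, hx⟩
    have hvx : G.Adj v x := by rw [← G.mem_neighborSet, hx]; rfl
    refine key_lemma G ℋ hcrit S hS v hv x hvx fun b hb hbx => ?_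
    rw [← G.mem_neighborSet, hx] at hb
    exact absurd hb hbx
  · rintro ⟨x, y, hxy, hset⟩
    have hvx : G.Adj v x := by rw [← G.mem_neighborSet, hset]; left; rfl
    refine key_lemma G ℋ hcrit S hS v hv x hvx fun b hb hbx => ?_
    rw [← G.mem_neighborSet, hset] at hb
    rcases hb with rfl | rfl
    · exact absurd rfl hbx
    · exact hxy
  · rintro ⟨x, y, z, hcard, hset, (hf | hf)⟩ <;> obtain ⟨f⟩ := hf
    · -- P₃ case: take the image of the middle vertex 1
      set w : V := (f (1 : Fin 3)).1 with hwdef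
      have hwmem : w ∈ ({x, y, z} : Set V) := (f (1 : Fin 3)).2
      have hvw : G.Adj v w := by rw [← G.mem_neighborSet, hset]; exact hwmem
      refine key_lemma G ℋ hcrit S hS v hv w hvw fun b hb hbw => ?_
      rw [← G.mem_neighborSet, hset] at hb
      -- b is in the set, b ≠ w; get its preimage j ≠ 1 under f
      obtain ⟨j, hj⟩ := f.surjective ⟨b, hb⟩
      have hj1 : j ≠ 1 := by
        intro h; subst h
        exact hbw (by simpa [hwdef] using (congrArg Subtype.val hj).symm)
      have hadj : (pathGraph 3).Adj 1 j := by
        fin_cases j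
        · rw [pathGraph_adj]; decide
        · exact absurd rfl hj1
        · rw [pathGraph_adj]; decide
      have := f.map_adj_iff.mpr hadj
      rw [hj] at this
      simpa [SimpleGraph.comap, hwdef] using this
    · -- C₃ case: take w = image of 0 (any vertex); all pairs adjacent
      set w : V := (f (0 : Fin 3)).1 with hwdef
      have hwmem : w ∈ ({x, y, z} : Set V) := (f (0 : Fin 3)).2
      have hvw : G.Adj v w := by rw [← G.mem_neighborSet, hset]; exact hwmem
      refine key_lemma G ℋ hcrit S hS v hv w hvw fun b hb hbw => ?_
      rw [← G.mem_neighborSet, hset] at hb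
      obtain ⟨j, hj⟩ := f.surjective ⟨b, hb⟩
      have hj0 : j ≠ 0 := by
        intro h; subst h
        exact hbw (by simpa [hwdef] using (congrArg Subtype.val hj).symm)
      have hadj : (cycleGraph 3).Adj 0 j := by
        rw [cycleGraph_three_eq_top]
        exact fun h => hj0 h.symm
      have := f.map_adj_iff.mpr hadj
      rw [hj] at this
      simpa [SimpleGraph.comap, hwdef] using this
  · rintro ⟨x, hvx, hdeg⟩
    have hsub : G.neighborSet x ⊆ ({x} : Set V)ᶜ := by
      intro b hb
      simp only [Set.mem_compl_iff, Set.mem_singleton_iff]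
      rintro rfl
      exact G.loopless.irrefl _ hb
    have hcompl : (({x} : Set V)ᶜ).ncard = Fintype.card V - 1 := by
      have h := Set.ncard_add_ncard_compl ({x} : Set V)
      have h1 : ({x} : Set V).ncard = 1 := Set.ncard_singleton x
      have h2 : Nat.card V = Fintype.card V := Nat.card_eq_fintype_card
      omega
    have heq : G.neighborSet x = ({x} : Set V)ᶜ :=
      Set.eq_of_subset_of_ncard_le hsub (by rw [hcompl, hdeg]) (Set.toFinite _)
    refine key_lemma G ℋ hcrit S hS v hv x hvx fun b hb hbx => ?_
    rw [← G.mem_neighborSet, heq]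
    simpa using hbx
end

section
/- Let G be a finite simple graph, S ⊆ V(G), and H = G[S] the subgraph induced by S. For adjacent vertices u, v of G, let w be the new vertex of G/uv and define f(S) = S if u, v ∉ S and f(S) = (S ∪ {w}) − {u, v} otherwise. Then the edge uv is H-critical for S (i.e., (G/uv)[f(S)] is not isomorphic to H) if and only if either (1) both u, v ∈ S, or (2) exactly one endpoint, say v, lies in S, u ∈ V(G) − S, and u is not a corner dominated by v in the induced subgraph G[S ∪ {u}]. -/
open SimpleGraph

def contractSet {V : Type*} (S : Set V) (u v : V) : Set {x : V // x ≠ v} :=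
  {x | (x.1 ∈ S ∧ x.1 ≠ u) ∨ (x.1 = u ∧ (u ∈ S ∨ v ∈ S)) ∨ (x.1 ∈ S ∧ u ∉ S ∧ v ∉ S)}

namespace Stmt11Aux

variable {V : Type*}

lemma contract_adj (G : SimpleGraph V) (u v : V) (a b : {x : V // x ≠ v}) :
    (G.contractEdge u v).Adj a b ↔
      a ≠ b ∧ (G.Adj a.1 b.1 ∨ (a.1 = u ∧ G.Adj v b.1) ∨ (b.1 = u ∧ G.Adj v a.1)) := by
  rw [SimpleGraph.contractEdge, SimpleGraph.fromRel_adj]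
  constructor
  · rintro ⟨h, (h2 | h2) | (h2 | h2)⟩
    exacts [⟨h, Or.inl h2⟩, ⟨h, Or.inr (Or.inl h2)⟩, ⟨h, Or.inl h2.symm⟩,
      ⟨h, Or.inr (Or.inr h2)⟩]
  · rintro ⟨h, h2 | h2 | h2⟩
    exacts [⟨h, Or.inl (Or.inl h2)⟩, ⟨h, Or.inl (Or.inr h2)⟩, ⟨h, Or.inr (Or.inr h2)⟩]

lemma noIso_of_lt {α : Type*} [Fintype α] {H K : SimpleGraph α} (h : H < K) :
    ¬ Nonempty (H ≃g K) := by
  rintro ⟨φ⟩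
  have hc : H.edgeSet.ncard = K.edgeSet.ncard := by
    rw [← Nat.card_coe_set_eq, ← Nat.card_coe_set_eq]
    exact Nat.card_congr φ.mapEdgeSet
  have hss : H.edgeSet ⊂ K.edgeSet := SimpleGraph.edgeSet_ssubset_edgeSet.2 h
  exact (Set.ncard_lt_ncard hss (Set.toFinite _)).ne hc

lemma nonempty_iso_comap {α β : Type*} (H : SimpleGraph α) (K : SimpleGraph β) (e : α ≃ β) :
    Nonempty (H ≃g K) ↔ Nonempty (H ≃g K.comap e) := by
  have i : K.comap ⇑e ≃g K := ⟨e, Iff.rfl⟩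
  exact ⟨fun ⟨φ⟩ => ⟨φ.trans i.symm⟩, fun ⟨φ⟩ => ⟨φ.trans i⟩⟩

lemma comap_adj' (G : SimpleGraph V) (S : Set V) (u v : V)
    (e : ↥S ≃ ↥(contractSet S u v)) (a b : ↥S) :
    (((G.contractEdge u v).induce (contractSet S u v)).comap e).Adj a b ↔
      ((e a).1.1 ≠ (e b).1.1 ∧ (G.Adj (e a).1.1 (e b).1.1 ∨
        ((e a).1.1 = u ∧ G.Adj v (e b).1.1) ∨ ((e b).1.1 = u ∧ G.Adj v (e a).1.1))) := by
  rw [SimpleGraph.comap_adj]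
  change (G.contractEdge u v).Adj (e a).1 (e b).1 ↔ _
  rw [contract_adj]
  constructor
  · rintro ⟨h, h2⟩
    exact ⟨fun hc => h (Subtype.ext hc), h2⟩
  · rintro ⟨h, h2⟩
    exact ⟨fun hc => h (congrArg Subtype.val hc), h2⟩

/-- Equiv used in the cases `v ∉ S`. -/
def eAC (S : Set V) (u v : V) (hv : v ∉ S) : ↥S ≃ ↥(contractSet S u v) where
  toFun a := ⟨⟨a.1, fun h => hv (h ▸ a.2)⟩, by
    by_cases h : a.1 = u
    · exact Or.inr (Or.inl ⟨h, Or.inl (h ▸ a.2)⟩)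
    · exact Or.inl ⟨a.2, h⟩⟩
  invFun b := ⟨b.1.1, by
    rcases b.2 with h | h | h
    · exact h.1
    · rw [h.1]; exact h.2.resolve_right hv
    · exact h.1⟩
  left_inv a := rfl
  right_inv b := Subtype.ext (Subtype.ext rfl)

lemma eAC_val (S : Set V) (u v : V) (hv : v ∉ S) (a : ↥S) :
    ((eAC S u v hv) a).1.1 = a.1 := rfl

def eDfun (S : Set V) (u v : V) [DecidableEq V] (hu : u ∉ S) (hv : v ∈ S) (hne : u ≠ v)
    (a : ↥S) : ↥(contractSet S u v) :=
  if h : a.1 = v then ⟨⟨u, hne⟩, Or.inr (Or.inl ⟨rfl, Or.inr hv⟩)⟩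
  else ⟨⟨a.1, h⟩, Or.inl ⟨a.2, fun hq => hu (hq ▸ a.2)⟩⟩

lemma eDfun_val (S : Set V) (u v : V) [DecidableEq V] (hu : u ∉ S) (hv : v ∈ S) (hne : u ≠ v)
    (a : ↥S) : (eDfun S u v hu hv hne a).1.1 = if a.1 = v then u else a.1 := by
  unfold eDfun; split_ifs <;> rfl

def eDinv (S : Set V) (u v : V) [DecidableEq V] (hu : u ∉ S) (hv : v ∈ S)
    (b : ↥(contractSet S u v)) : ↥S :=
  if h : b.1.1 = u then ⟨v, hv⟩
  else ⟨b.1.1, by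
    rcases b.2 with h2 | h2 | h2
    · exact h2.1
    · exact absurd h2.1 h
    · exact h2.1⟩

lemma eDinv_val (S : Set V) (u v : V) [DecidableEq V] (hu : u ∉ S) (hv : v ∈ S)
    (b : ↥(contractSet S u v)) :
    (eDinv S u v hu hv b).1 = if b.1.1 = u then v else b.1.1 := by
  unfold eDinv; split_ifs <;> rfl

/-- Equiv used in the case `u ∉ S`, `v ∈ S`. -/
def eD (S : Set V) (u v : V) [DecidableEq V] (hu : u ∉ S) (hv : v ∈ S) (hne : u ≠ v) :
    ↥S ≃ ↥(contractSet S u v) where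
  toFun := eDfun S u v hu hv hne
  invFun := eDinv S u v hu hv
  left_inv a := by
    apply Subtype.ext
    rw [eDinv_val, eDfun_val]
    by_cases h : a.1 = v
    · rw [if_pos h, if_pos rfl, h]
    · rw [if_neg h, if_neg (show a.1 ≠ u from fun hq => hu (hq ▸ a.2))]
  right_inv b := by
    apply Subtype.ext
    apply Subtype.ext
    show (eDfun S u v hu hv hne (eDinv S u v hu hv b)).1.1 = b.1.1
    rw [eDfun_val]
    by_cases h : b.1.1 = u
    · rw [if_pos (by rw [eDinv_val, if_pos h]), h]
    · have h2 : (eDinv S u v hu hv b).1 = b.1.1 := by rw [eDinv_val, if_neg h]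
      rw [if_neg (by rw [h2]; exact b.1.2), h2]

lemma eD_val (S : Set V) (u v : V) [DecidableEq V] (hu : u ∉ S) (hv : v ∈ S) (hne : u ≠ v)
    (a : ↥S) : ((eD S u v hu hv hne) a).1.1 = if a.1 = v then u else a.1 :=
  eDfun_val S u v hu hv hne a

lemma caseA (G : SimpleGraph V) (S : Set V) (u v : V) (hu : u ∉ S) (hv : v ∉ S) :
    Nonempty ((G.induce S) ≃g ((G.contractEdge u v).induce (contractSet S u v))) := by
  rw [nonempty_iso_comap _ _ (eAC S u v hv)]
  have heq : (((G.contractEdge u v).induce (contractSet S u v)).comap ⇑(eAC S u v hv))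
      = G.induce S := by
    ext a b
    rw [comap_adj' G S u v (eAC S u v hv)]
    show _ ↔ G.Adj a.1 b.1
    constructor
    · rintro ⟨h, h2 | h2 | h2⟩
      · exact h2
      · exact absurd (h2.1 ▸ a.2) hu
      · exact absurd (h2.1 ▸ b.2) hu
    · intro h
      exact ⟨h.ne, Or.inl h⟩
  rw [heq]
  exact ⟨RelIso.refl _⟩

lemma caseB [Fintype V] (G : SimpleGraph V) (S : Set V) (u v : V) (hu : u ∈ S) (hv : v ∈ S) :
    ¬ Nonempty ((G.induce S) ≃g ((G.contractEdge u v).induce (contractSet S u v))) := by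
  classical
  rintro ⟨φ⟩
  have e2 : ↥(contractSet S u v) ≃ ↥(S \ {v}) :=
  { toFun := fun y => ⟨y.1.1, ⟨by
      rcases y.2 with h | h | h
      · exact h.1
      · rw [h.1]; exact hu
      · exact h.1, y.1.2⟩⟩
    invFun := fun z => ⟨⟨z.1, z.2.2⟩, by
      by_cases h : z.1 = u
      · exact Or.inr (Or.inl ⟨h, Or.inl hu⟩)
      · exact Or.inl ⟨z.2.1, h⟩⟩
    left_inv := fun y => Subtype.ext (Subtype.ext rfl)
    right_inv := fun z => rfl }
  have hcard : S.ncard = (S \ {v}).ncard := by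
    rw [← Nat.card_coe_set_eq, ← Nat.card_coe_set_eq]
    exact Nat.card_congr (φ.toEquiv.trans e2)
  exact absurd hcard.symm
    (Set.ncard_lt_ncard (Set.sdiff_singleton_ssubset.2 hv) (Set.toFinite _)).ne

lemma caseC [Fintype V] (G : SimpleGraph V) (S : Set V) (u v : V) (huv : G.Adj u v)
    (hu : u ∈ S) (hv : v ∉ S) :
    Nonempty ((G.induce S) ≃g ((G.contractEdge u v).induce (contractSet S u v))) ↔
      (∀ x ∈ S ∪ {v}, (x = v ∨ G.Adj v x) → (x = u ∨ G.Adj u x)) := by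
  classical
  haveI : Fintype ↥S := Set.Finite.fintype (Set.toFinite S)
  rw [nonempty_iso_comap _ _ (eAC S u v hv)]
  constructor
  · intro hiso
    by_contra hnd
    push_neg at hnd
    obtain ⟨x, hxm, hP, hxu, hxadj⟩ := hnd
    have hxS : x ∈ S := by
      rcases (Set.mem_union _ _ _).1 hxm with h | h
      · exact h
      · rw [Set.mem_singleton_iff] at h
        exact absurd huv (h ▸ hxadj)
    have hxv : x ≠ v := fun h => hv (h ▸ hxS)
    have hvx : G.Adj v x := hP.resolve_left hxv
    have hle : G.induce S ≤
        (((G.contractEdge u v).induce (contractSet S u v)).comap ⇑(eAC S u v hv)) := by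
      intro a b hab
      have hab' : G.Adj a.1 b.1 := hab
      exact (comap_adj' G S u v (eAC S u v hv) a b).2 ⟨hab'.ne, Or.inl hab'⟩
    have hne2 : G.induce S ≠
        (((G.contractEdge u v).induce (contractSet S u v)).comap ⇑(eAC S u v hv)) := by
      intro heq
      have hK : ((((G.contractEdge u v)).induce (contractSet S u v)).comap
          ⇑(eAC S u v hv)).Adj ⟨u, hu⟩ ⟨x, hxS⟩ :=
        (comap_adj' G S u v (eAC S u v hv) _ _).2
          ⟨fun h => hxu h.symm, Or.inr (Or.inl ⟨rfl, hvx⟩)⟩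
      rw [← heq] at hK
      exact hxadj hK
    exact noIso_of_lt (lt_of_le_of_ne hle hne2) hiso
  · intro hdom
    have heq : (((G.contractEdge u v).induce (contractSet S u v)).comap ⇑(eAC S u v hv))
        = G.induce S := by
      ext a b
      rw [comap_adj' G S u v (eAC S u v hv)]
      show _ ↔ G.Adj a.1 b.1
      constructor
      · rintro ⟨h, h2 | h2 | h2⟩
        · exact h2
        · rcases hdom b.1 (Set.mem_union_left _ b.2) (Or.inr h2.2) with hb | hb
          · exact absurd (h2.1.trans hb.symm) h
          · exact (show (a : V) = u from h2.1).symm ▸ hb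
        · rcases hdom a.1 (Set.mem_union_left _ a.2) (Or.inr h2.2) with ha | ha
          · exact absurd (ha.trans h2.1.symm) h
          · exact (show (b : V) = u from h2.1).symm ▸ ha.symm
      · intro h
        exact ⟨h.ne, Or.inl h⟩
    rw [heq]
    exact ⟨RelIso.refl _⟩

lemma caseD [Fintype V] (G : SimpleGraph V) (S : Set V) (u v : V) (huv : G.Adj u v)
    (hu : u ∉ S) (hv : v ∈ S) :
    Nonempty ((G.induce S) ≃g ((G.contractEdge u v).induce (contractSet S u v))) ↔
      (∀ x ∈ S ∪ {u}, (x = u ∨ G.Adj u x) → (x = v ∨ G.Adj v x)) := by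
  classical
  haveI : Fintype ↥S := Set.Finite.fintype (Set.toFinite S)
  have hne : u ≠ v := huv.ne
  rw [nonempty_iso_comap _ _ (eD S u v hu hv hne)]
  have hadj : ∀ a b : ↥S,
      ((((G.contractEdge u v)).induce (contractSet S u v)).comap
        ⇑(eD S u v hu hv hne)).Adj a b ↔
      ((if a.1 = v then u else a.1) ≠ (if b.1 = v then u else b.1) ∧
        (G.Adj (if a.1 = v then u else a.1) (if b.1 = v then u else b.1) ∨
          ((if a.1 = v then u else a.1) = u ∧ G.Adj v (if b.1 = v then u else b.1)) ∨
          ((if b.1 = v then u else b.1) = u ∧ G.Adj v (if a.1 = v then u else a.1)))) := by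
    intro a b
    rw [comap_adj' G S u v (eD S u v hu hv hne) a b, eD_val S u v hu hv hne a,
      eD_val S u v hu hv hne b]
  constructor
  · intro hiso
    by_contra hnd
    push_neg at hnd
    obtain ⟨x, hxm, hP, hxv, hxadj⟩ := hnd
    have hxS : x ∈ S := by
      rcases (Set.mem_union _ _ _).1 hxm with h | h
      · exact h
      · rw [Set.mem_singleton_iff] at h
        exact absurd huv.symm (h ▸ hxadj)
    have hxu : x ≠ u := fun h => hu (h ▸ hxS)
    have hux : G.Adj u x := hP.resolve_left hxu
    have hle : G.induce S ≤
        (((G.contractEdge u v).induce (contractSet S u v)).comap ⇑(eD S u v hu hv hne)) := by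
      intro a b hab
      have hab' : G.Adj a.1 b.1 := hab
      rw [hadj a b]
      by_cases ha : a.1 = v <;> by_cases hb : b.1 = v
      · exact absurd (ha.trans hb.symm) hab'.ne
      · rw [if_pos ha, if_neg hb]
        exact ⟨fun h => hu (h.symm ▸ b.2), Or.inr (Or.inl ⟨rfl, ha ▸ hab'⟩)⟩
      · rw [if_neg ha, if_pos hb]
        exact ⟨fun h => hu (h ▸ a.2), Or.inr (Or.inr ⟨rfl, hb ▸ hab'.symm⟩)⟩
      · rw [if_neg ha, if_neg hb]
        exact ⟨hab'.ne, Or.inl hab'⟩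
    have hne2 : G.induce S ≠
        (((G.contractEdge u v).induce (contractSet S u v)).comap ⇑(eD S u v hu hv hne)) := by
      intro heq
      have hK : ((((G.contractEdge u v)).induce (contractSet S u v)).comap
          ⇑(eD S u v hu hv hne)).Adj ⟨v, hv⟩ ⟨x, hxS⟩ := by
        rw [hadj]
        rw [if_pos (show (⟨v, hv⟩ : ↥S).1 = v from rfl),
          if_neg (show (⟨x, hxS⟩ : ↥S).1 ≠ v from hxv)]
        exact ⟨hux.ne, Or.inl hux⟩
      rw [← heq] at hK
      exact hxadj hK
    exact noIso_of_lt (lt_of_le_of_ne hle hne2) hiso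
  · intro hdom
    have heq : (((G.contractEdge u v).induce (contractSet S u v)).comap ⇑(eD S u v hu hv hne))
        = G.induce S := by
      ext a b
      rw [hadj a b]
      show _ ↔ G.Adj a.1 b.1
      by_cases ha : a.1 = v <;> by_cases hb : b.1 = v
      · rw [if_pos ha, if_pos hb, ha, hb]
        simp
      · rw [if_pos ha, if_neg hb, ha]
        constructor
        · rintro ⟨h, h2 | h2 | h2⟩
          · exact (hdom b.1 (Set.mem_union_left _ b.2) (Or.inr h2)).resolve_left hb
          · exact h2.2
          · exact absurd h2.1 (fun hq => hu (hq ▸ b.2))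
        · intro h
          exact ⟨fun hq => hu (hq.symm ▸ b.2), Or.inr (Or.inl ⟨rfl, h⟩)⟩
      · rw [if_neg ha, if_pos hb, hb]
        constructor
        · rintro ⟨h, h2 | h2 | h2⟩
          · exact ((hdom a.1 (Set.mem_union_left _ a.2) (Or.inr h2.symm)).resolve_left ha).symm
          · exact absurd h2.1 (fun hq => hu (hq ▸ a.2))
          · exact h2.2.symm
        · intro h
          exact ⟨fun hq => hu (hq ▸ a.2), Or.inr (Or.inr ⟨rfl, h.symm⟩)⟩
      · rw [if_neg ha, if_neg hb]
        constructor
        · rintro ⟨h, h2 | h2 | h2⟩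
          · exact h2
          · exact absurd h2.1 (fun hq => hu (hq ▸ a.2))
          · exact absurd h2.1 (fun hq => hu (hq ▸ b.2))
        · intro h
          exact ⟨h.ne, Or.inl h⟩
    rw [heq]
    exact ⟨RelIso.refl _⟩

end Stmt11Aux

/-- The edge `uv` is `H`-critical for `S` (where `H = G[S]`), i.e. `(G/uv)[f(S)]`
is not isomorphic to `G[S]`, if and only if either both endpoints lie in `S`, or
exactly one endpoint lies outside `S` and it is not a corner dominated by the other
endpoint in the induced subgraph on `S` together with that endpoint. -/
theorem stmt11 {V : Type*} [Fintype V] (G : SimpleGraph V) (S : Set V) (u v : V)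
    (huv : G.Adj u v) :
    (¬ Nonempty ((G.induce S) ≃g ((G.contractEdge u v).induce (contractSet S u v)))) ↔
      ((u ∈ S ∧ v ∈ S) ∨
        (u ∉ S ∧ v ∈ S ∧
          ¬ (∀ x ∈ S ∪ {u}, (x = u ∨ G.Adj u x) → (x = v ∨ G.Adj v x))) ∨
        (v ∉ S ∧ u ∈ S ∧
          ¬ (∀ x ∈ S ∪ {v}, (x = v ∨ G.Adj v x) → (x = u ∨ G.Adj u x)))) := by
  by_cases hu : u ∈ S <;> by_cases hv : v ∈ S
  · exact iff_of_true (Stmt11Aux.caseB G S u v hu hv) (Or.inl ⟨hu, hv⟩)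
  · have h1 := Stmt11Aux.caseC G S u v huv hu hv
    constructor
    · intro hni
      exact Or.inr (Or.inr ⟨hv, hu, fun hdom => hni (h1.2 hdom)⟩)
    · rintro (⟨_, h⟩ | ⟨h, _, _⟩ | ⟨_, _, h⟩) hne2
      · exact hv h
      · exact h hu
      · exact h (h1.1 hne2)
  · have h1 := Stmt11Aux.caseD G S u v huv hu hv
    constructor
    · intro hni
      exact Or.inr (Or.inl ⟨hu, hv, fun hdom => hni (h1.2 hdom)⟩)
    · rintro (⟨h, _⟩ | ⟨_, _, h⟩ | ⟨h, _, _⟩) hne2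
      · exact hu h
      · exact h (h1.1 hne2)
      · exact h hv
  · refine iff_of_false (not_not_intro (Stmt11Aux.caseA G S u v hu hv)) ?_
    rintro (⟨h, _⟩ | ⟨_, h, _⟩ | ⟨_, h, _⟩)
    exacts [hu h, hv h, hu h]
end

section
/- A finite simple graph G without isolated vertices is critically C_3-exist if and only if G is isomorphic to the triangle C_3. -/
open SimpleGraph

lemma tri_iff {W : Type*} (H : SimpleGraph W) :
    Nonempty (cycleGraph 3 ↪g H) ↔
      ∃ p q r : W, H.Adj p q ∧ H.Adj p r ∧ H.Adj q r := by
  constructor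
  · rintro ⟨f⟩
    exact ⟨f 0, f 1, f 2, f.map_rel_iff.mpr (by rw [cycleGraph_three_eq_top]; simp),
      f.map_rel_iff.mpr (by rw [cycleGraph_three_eq_top]; simp),
      f.map_rel_iff.mpr (by rw [cycleGraph_three_eq_top]; decide)⟩
  · rintro ⟨p, q, r, hpq, hpr, hqr⟩
    refine ⟨⟨⟨![p, q, r], ?_⟩, ?_⟩⟩
    · intro a b hab
      fin_cases a <;> fin_cases b <;> simp_all
    · intro a b
      show H.Adj (![p, q, r] a) (![p, q, r] b) ↔ _
      rw [cycleGraph_three_eq_top]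
      fin_cases a <;> fin_cases b <;>
        simp [hpq, hpr, hqr, hpq.symm, hpr.symm, hqr.symm, hpq.ne, hpr.ne, hqr.ne,
          hpq.ne', hpr.ne', hqr.ne', H.irrefl]

/-- A finite simple graph without isolated vertices is critically `C_3`-exist if
and only if it is isomorphic to the triangle `C_3`. -/
theorem stmt13 {V : Type*} [Fintype V] (G : SimpleGraph V)
    (hnoiso : ∀ x : V, ∃ y, G.Adj x y) :
    (Nonempty (cycleGraph 3 ↪g G) ∧
        ∀ u v, G.Adj u v → ¬ Nonempty (cycleGraph 3 ↪g G.contractEdge u v)) ↔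
      Nonempty (G ≃g cycleGraph 3) := by
  classical
  constructor
  · rintro ⟨htri, hcrit⟩
    rw [tri_iff] at htri
    obtain ⟨a, b, c, hab, hac, hbc⟩ := htri
    -- every deleted vertex lies in every triangle
    have key : ∀ u v : V, G.Adj u v → ∀ p q r : V,
        G.Adj p q → G.Adj p r → G.Adj q r → v = p ∨ v = q ∨ v = r := by
      intro u v huv p q r hpq hpr hqr
      by_contra h
      push_neg at h
      obtain ⟨h1, h2, h3⟩ := h
      refine hcrit u v huv ((tri_iff _).mpr ⟨⟨p, (h1 ∘ Eq.symm)⟩, ⟨q, (h2 ∘ Eq.symm)⟩,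
        ⟨r, (h3 ∘ Eq.symm)⟩, ?_, ?_, ?_⟩) <;>
        refine (SimpleGraph.fromRel_adj _ _ _).mpr ⟨?_, Or.inl (Or.inl ?_)⟩ <;>
        simp [Subtype.ext_iff, hpq, hpr, hqr, hpq.ne, hpr.ne, hqr.ne]
    -- every vertex is a, b, or c
    have hall : ∀ x : V, x = a ∨ x = b ∨ x = c := by
      intro x
      obtain ⟨y, hxy⟩ := hnoiso x
      exact key y x hxy.symm a b c hab hac hbc
    have hdist : a ≠ b ∧ a ≠ c ∧ b ≠ c := ⟨hab.ne, hac.ne, hbc.ne⟩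
    -- any two distinct vertices are adjacent
    have hadj : ∀ x y : V, x ≠ y → G.Adj x y := by
      intro x y hxy
      rcases hall x with hx | hx | hx <;> rcases hall y with hy | hy | hy <;>
        subst hx <;> subst hy <;>
        first
        | exact absurd rfl hxy
        | assumption
        | exact hab.symm
        | exact hac.symm
        | exact hbc.symm
    -- build the equivalence
    let f : V → Fin 3 := fun x => if x = a then 0 else if x = b then 1 else 2
    let g : Fin 3 → V := ![a, b, c]
    have hgf : Function.LeftInverse g f := by
      intro x
      rcases hall x with hx | hx | hx <;> subst hx <;>
        simp [f, g, hdist.1, hdist.2.1, hdist.2.2, Ne.symm hdist.1,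
          Ne.symm hdist.2.1, Ne.symm hdist.2.2]
    have hfg : Function.RightInverse g f := by
      intro i
      fin_cases i <;> simp [f, g, hdist.1, hdist.2.1, hdist.2.2, Ne.symm hdist.1,
        Ne.symm hdist.2.1, Ne.symm hdist.2.2]
    let e : V ≃ Fin 3 := ⟨f, g, hgf, hfg⟩
    refine ⟨⟨e, ?_⟩⟩
    intro x y
    rw [cycleGraph_three_eq_top]
    simp only [SimpleGraph.top_adj]
    constructor
    · intro h
      exact hadj x y (fun hxy => h (by rw [hxy]))
    · intro h
      exact fun hexy => G.irrefl ((e.injective hexy : x = y) ▸ h)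
  · rintro ⟨e⟩
    have hcard : Fintype.card V = 3 := by
      simpa using Fintype.card_congr e.toEquiv
    constructor
    · exact ⟨e.symm.toEmbedding⟩
    · intro u v huv hne
      rw [tri_iff] at hne
      obtain ⟨p, q, r, hpq, hpr, hqr⟩ := hne
      have h1 : p ≠ q := fun h => (G.contractEdge u v).irrefl (h ▸ hpq)
      have h2 : p ≠ r := fun h => (G.contractEdge u v).irrefl (h ▸ hpr)
      have h3 : q ≠ r := fun h => (G.contractEdge u v).irrefl (h ▸ hqr)
      -- v, p, q, r are four distinct elements of V
      have : ({v, p.1, q.1, r.1} : Finset V).card ≤ Fintype.card V :=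
        Finset.card_le_univ _
      rw [hcard] at this
      have h4 : ({v, p.1, q.1, r.1} : Finset V).card = 4 := by
        rw [Finset.card_insert_of_notMem (by
            simp only [Finset.mem_insert, Finset.mem_singleton]
            push_neg
            exact ⟨Ne.symm p.2, Ne.symm q.2, Ne.symm r.2⟩),
          Finset.card_insert_of_notMem (by
            simp only [Finset.mem_insert, Finset.mem_singleton]
            push_neg
            exact ⟨fun h => h1 (Subtype.ext h), fun h => h2 (Subtype.ext h)⟩),
          Finset.card_insert_of_notMem (by
            simp only [Finset.mem_singleton]
            exact fun h => h3 (Subtype.ext h)),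
          Finset.card_singleton]
      omega
end

section
/- A finite simple graph is claw-free-split if and only if it is isomorphic to the bull. -/
set_option maxRecDepth 10000
set_option synthInstance.maxSize 2000
set_option synthInstance.maxHeartbeats 1000000
set_option maxHeartbeats 2000000


open SimpleGraph

/-- The claw `K_{1,3}`. -/
def claw : SimpleGraph (Fin 1 ⊕ Fin 3) := completeBipartiteGraph (Fin 1) (Fin 3)

/-- The bull: a triangle `0, 1, 2` together with two pendant vertices `3` and `4`,
adjacent to the distinct triangle vertices `1` and `2` respectively. -/
def bull : SimpleGraph (Fin 5) :=
  SimpleGraph.fromRel fun a b =>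
    (a = 0 ∧ b = 1) ∨ (a = 0 ∧ b = 2) ∨ (a = 1 ∧ b = 2) ∨ (a = 1 ∧ b = 3) ∨ (a = 2 ∧ b = 4)

section Aux

instance : DecidableRel bull.Adj := fun a b =>
  decidable_of_iff' _ (SimpleGraph.fromRel_adj _ a b)

instance : DecidableRel claw.Adj := fun a b => by
  unfold claw completeBipartiteGraph
  exact inferInstanceAs (Decidable (_ ∨ _))

instance {V : Type*} (G : SimpleGraph V) [DecidableEq V] [DecidableRel G.Adj] (u v : V) :
    DecidableRel (G.contractEdge u v).Adj := fun a b =>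
  decidable_of_iff' _ (SimpleGraph.fromRel_adj _ a b)

lemma nonempty_iso_iff {α β : Type*} [Fintype α] [Fintype β] (hc : Fintype.card α = Fintype.card β)
    (A : SimpleGraph α) (B : SimpleGraph β) :
    Nonempty (A ≃g B) ↔
      ∃ f : α → β, (∀ x y, x ≠ y → f x ≠ f y) ∧ ∀ x y, A.Adj x y ↔ B.Adj (f x) (f y) := by
  constructor
  · rintro ⟨e⟩
    exact ⟨e, fun x y h => fun h2 => h (e.toEquiv.injective h2), fun x y => (e.map_rel_iff).symm⟩
  · rintro ⟨f, hinj, h⟩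
    have hi : Function.Injective f := fun x y hxy => by
      by_contra hne; exact hinj x y hne hxy
    have hb : Function.Bijective f := (Fintype.bijective_iff_injective_and_card f).2 ⟨hi, hc⟩
    exact ⟨⟨Equiv.ofBijective f hb, fun {x y} => (h x y).symm⟩⟩

lemma nonempty_emb_iff {α β : Type*} (A : SimpleGraph α) (B : SimpleGraph β) :
    Nonempty (A ↪g B) ↔
      ∃ f : α → β, (∀ x y, x ≠ y → f x ≠ f y) ∧ ∀ x y, A.Adj x y ↔ B.Adj (f x) (f y) := by
  constructor
  · rintro ⟨e⟩
    exact ⟨e, fun x y h h2 => h (e.injective h2), fun x y => (e.map_rel_iff).symm⟩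
  · rintro ⟨f, hinj, h⟩
    have hi : Function.Injective f := fun x y hxy => by
      by_contra hne; exact hinj x y hne hxy
    exact ⟨⟨⟨f, hi⟩, fun {x y} => (h x y).symm⟩⟩

lemma claw_adj (x y : Fin 1 ⊕ Fin 3) :
    claw.Adj x y ↔ (x.isLeft ∧ y.isRight ∨ x.isRight ∧ y.isLeft) := Iff.rfl

lemma claw_emb {V : Type*} (G : SimpleGraph V) (w x y z : V)
    (hxy : x ≠ y) (hxz : x ≠ z) (hyz : y ≠ z)
    (hwx : G.Adj w x) (hwy : G.Adj w y) (hwz : G.Adj w z)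
    (nxy : ¬ G.Adj x y) (nxz : ¬ G.Adj x z) (nyz : ¬ G.Adj y z) :
    Nonempty (claw ↪g G) := by
  have nyx : ¬ G.Adj y x := fun h => nxy h.symm
  have nzx : ¬ G.Adj z x := fun h => nxz h.symm
  have nzy : ¬ G.Adj z y := fun h => nyz h.symm
  refine ⟨⟨⟨Sum.elim (fun _ => w) ![x, y, z], ?_⟩, ?_⟩⟩
  · rintro (i | i) (j | j) h <;> simp only [Sum.elim_inl, Sum.elim_inr] at h
    · simp [Fin.eq_zero i, Fin.eq_zero j]
    · exfalso; fin_cases j <;> simp_all [hwx.ne, hwy.ne, hwz.ne]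
    · exfalso; fin_cases i <;> simp_all [hwx.ne', hwy.ne', hwz.ne']
    · congr 1; fin_cases i <;> fin_cases j <;> simp_all
  · rintro (i | i) (j | j) <;>
      dsimp only [DFunLike.coe, Function.instFunLikeEmbedding] <;>
      simp only [Function.Embedding.coeFn_mk, Sum.elim_inl, Sum.elim_inr, claw_adj] <;> simp
    · fin_cases j <;> simp [hwx, hwy, hwz]
    · fin_cases i <;> simp [hwx.symm, hwy.symm, hwz.symm]
    · fin_cases i <;> fin_cases j <;> simp [nxy, nxz, nyz, nyx, nzx, nzy, G.irrefl]

lemma build_iso_s14 {V : Type*} [Fintype V] (G : SimpleGraph V) (hcard : Fintype.card V = 5)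
    (a b t p q : V)
    (hab : G.Adj a b) (hat : G.Adj a t) (hbt : G.Adj b t) (hap : G.Adj a p) (hbq : G.Adj b q)
    (naq : ¬ G.Adj a q) (nbp : ¬ G.Adj b p) (ntp : ¬ G.Adj t p) (ntq : ¬ G.Adj t q)
    (npq : ¬ G.Adj p q)
    (htp : t ≠ p) (htq : t ≠ q) (hpq : p ≠ q) (hap' : a ≠ p) (haq' : a ≠ q)
    (hbp' : b ≠ p) (hbq' : b ≠ q) :
    Nonempty (G ≃g bull) := by
  have hta : t ≠ a := hat.ne'
  have htb : t ≠ b := hbt.ne'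
  have hba : b ≠ a := hab.ne'
  have hinj : Function.Injective (![t, a, b, p, q] : Fin 5 → V) := by
    intro i j h
    fin_cases i <;> fin_cases j <;> simp_all <;>
      first
        | rfl
        | (exact absurd h.symm (by assumption))
        | (exact absurd h (by assumption))
  have hbij : Function.Bijective (![t, a, b, p, q] : Fin 5 → V) :=
    (Fintype.bijective_iff_injective_and_card _).2 ⟨hinj, by simp [hcard]⟩
  refine ⟨(⟨Equiv.ofBijective _ hbij, ?_⟩ : bull ≃g G).symm⟩
  intro x y
  show G.Adj (![t, a, b, p, q] x) (![t, a, b, p, q] y) ↔ bull.Adj x y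
  have nqa : ¬ G.Adj q a := fun h => naq h.symm
  have npb : ¬ G.Adj p b := fun h => nbp h.symm
  have npt : ¬ G.Adj p t := fun h => ntp h.symm
  have nqt : ¬ G.Adj q t := fun h => ntq h.symm
  have nqp : ¬ G.Adj q p := fun h => npq h.symm
  have hta' := hat.symm
  have htb' := hbt.symm
  have hba'' := hab.symm
  have hpa := hap.symm
  have hqb := hbq.symm
  fin_cases x <;> fin_cases y <;>
    simp_all [bull, SimpleGraph.fromRel_adj, G.irrefl] <;> decide

lemma contr_iso {V W : Type*} {J : SimpleGraph V} {H : SimpleGraph W} (e : J ≃g H) (a b : V) :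
    Nonempty (J.contractEdge a b ≃g H.contractEdge (e a) (e b)) := by
  refine ⟨⟨Equiv.subtypeEquiv e.toEquiv fun x => ?_, ?_⟩⟩
  · simp [EmbeddingLike.apply_eq_iff_eq]
  · intro p q
    simp only [SimpleGraph.contractEdge, SimpleGraph.fromRel_adj, Equiv.subtypeEquiv_apply,
      ne_eq, Subtype.mk.injEq, EmbeddingLike.apply_eq_iff_eq, e.map_rel_iff]
    constructor
    · rintro ⟨h1, h2⟩
      refine ⟨fun hh => h1 (congrArg Subtype.val hh), ?_⟩
      rcases h2 with (h | ⟨h, h'⟩) | (h | ⟨h, h'⟩)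
      · exact Or.inl (Or.inl (e.map_adj_iff.1 h))
      · exact Or.inl (Or.inr ⟨e.toEquiv.injective h, e.map_adj_iff.1 h'⟩)
      · exact Or.inr (Or.inl (e.map_adj_iff.1 h))
      · exact Or.inr (Or.inr ⟨e.toEquiv.injective h, e.map_adj_iff.1 h'⟩)
    · rintro ⟨h1, h2⟩
      refine ⟨fun hh => h1 (Subtype.ext hh), ?_⟩
      rcases h2 with (h | ⟨h, h'⟩) | (h | ⟨h, h'⟩)
      · exact Or.inl (Or.inl (e.map_adj_iff.2 h))
      · exact Or.inl (Or.inr ⟨congrArg e h, e.map_adj_iff.2 h'⟩)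
      · exact Or.inr (Or.inl (e.map_adj_iff.2 h))
      · exact Or.inr (Or.inr ⟨congrArg e h, e.map_adj_iff.2 h'⟩)

lemma freeSplit_transfer {V W : Type*} {J : SimpleGraph V} {H : SimpleGraph W} (e : J ≃g H)
    (h : IsFreeSplitOf H claw) : IsFreeSplitOf J claw := by
  obtain ⟨h1, a, b, hab, ⟨i⟩⟩ := h
  constructor
  · rintro ⟨f⟩
    exact h1 ⟨(e.toEmbedding).comp f⟩
  · refine ⟨e.symm a, e.symm b, ?_, ?_⟩
    · rw [← e.map_adj_iff]; simpa using hab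
    · obtain ⟨c⟩ := contr_iso e (e.symm a) (e.symm b)
      rw [e.apply_symm_apply, e.apply_symm_apply] at c
      exact ⟨(SimpleGraph.Iso.comp c.symm i : claw ≃g J.contractEdge (e.symm a) (e.symm b))⟩

lemma pattern (A B : Fin 3 → Bool)
    (h1 : ∀ i, A i ∨ B i)
    (h2 : ¬(A 0 ∧ A 1 ∧ A 2)) (h3 : ¬(B 0 ∧ B 1 ∧ B 2))
    (h4 : ∀ i j, i ≠ j → A i → A j → (B i ∨ B j))
    (h5 : ∀ i j, i ≠ j → B i → B j → (A i ∨ A j)) :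
    ∃ t p q : Fin 3, t ≠ p ∧ t ≠ q ∧ p ≠ q ∧
      A t ∧ B t ∧ A p ∧ ¬ B p ∧ ¬ A q ∧ B q := by
  revert h1 h2 h3 h4 h5; revert A B; decide

lemma bull_freeSplit : IsFreeSplitOf bull claw := by
  refine ⟨?_, 1, 2, by decide, ?_⟩
  · rw [nonempty_emb_iff]; decide
  · rw [nonempty_iso_iff (by simp)]; decide

end Aux

/-- A finite simple graph is claw-free-split if and only if it is isomorphic to
the bull. -/
theorem stmt14 {V : Type*} [Fintype V] (G : SimpleGraph V) :
    IsFreeSplitOf G claw ↔ Nonempty (G ≃g bull) := by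
  constructor
  · rintro ⟨hfree, a, b, hab, ⟨e⟩⟩
    classical
    -- the merged vertex
    set m : {x : V // x ≠ b} := ⟨a, hab.ne⟩ with hm_def
    -- cardinality
    have hc4 : Fintype.card {x : V // x ≠ b} = 4 := by
      rw [← Fintype.card_congr e.toEquiv]; simp
    have hcard : Fintype.card V = 5 := by
      have h1 : Fintype.card {x : V // x ≠ b} = Fintype.card V - 1 := by
        rw [Fintype.card_subtype_compl fun x => x = b]
        simp [Fintype.card_subtype_eq]
      have h2 : 0 < Fintype.card V := Fintype.card_pos_iff.2 ⟨b⟩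
      omega
    have key : ∀ x y : Fin 1 ⊕ Fin 3,
        (G.contractEdge a b).Adj (e x) (e y) ↔ claw.Adj x y := fun x y => e.map_rel_iff
    have unf : ∀ x y : {v : V // v ≠ b}, (G.contractEdge a b).Adj x y ↔
        (x.1 ≠ y.1 ∧ ((G.Adj x.1 y.1 ∨ (x.1 = a ∧ G.Adj b y.1)) ∨
          (G.Adj y.1 x.1 ∨ (y.1 = a ∧ G.Adj b x.1)))) := by
      intro x y
      rw [SimpleGraph.contractEdge, SimpleGraph.fromRel_adj]
      constructor
      · rintro ⟨h1, h2⟩; exact ⟨fun hh => h1 (Subtype.ext hh), h2⟩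
      · rintro ⟨h1, h2⟩; exact ⟨fun hh => h1 (congrArg Subtype.val hh), h2⟩
    cases hsm : e.symm m with
    | inl j =>
      have hmm : e (Sum.inl j) = m := by rw [← hsm, e.apply_symm_apply]
      set l : Fin 3 → V := fun i => (e (Sum.inr i)).1 with hl_def
      have hlb : ∀ i, l i ≠ b := fun i => (e (Sum.inr i)).2
      have hlne : ∀ i i' : Fin 3, i ≠ i' → l i ≠ l i' := by
        intro i i' hii hv
        exact hii (Sum.inr_injective (e.toEquiv.injective (Subtype.ext hv)))
      have hla : ∀ i, l i ≠ a := by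
        intro i hv
        have : e (Sum.inr i) = m := Subtype.ext hv
        rw [← hmm] at this
        exact Sum.inr_ne_inl (e.toEquiv.injective this)
      have hAB : ∀ i, G.Adj a (l i) ∨ G.Adj b (l i) := by
        intro i
        have h := (key (Sum.inl j) (Sum.inr i)).2 (by simp [claw_adj])
        rw [hmm] at h
        rw [unf] at h
        obtain ⟨hne, hor⟩ := h
        rcases hor with (h | ⟨_, h⟩) | (h | ⟨h, _⟩)
        · exact Or.inl h
        · exact Or.inr h
        · exact Or.inl h.symm
        · exact absurd h (hla i)
      have hll : ∀ i i' : Fin 3, i ≠ i' → ¬ G.Adj (l i) (l i') := by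
        intro i i' hii hadj
        have h : ¬ (G.contractEdge a b).Adj (e (Sum.inr i)) (e (Sum.inr i')) := by
          rw [key]; simp [claw_adj]
        exact h ((unf _ _).2 ⟨hlne i i' hii, Or.inl (Or.inl hadj)⟩)
      -- boolean pattern
      set A : Fin 3 → Bool := fun i => decide (G.Adj a (l i)) with hA_def
      set B : Fin 3 → Bool := fun i => decide (G.Adj b (l i)) with hB_def
      have hA : ∀ i, A i ↔ G.Adj a (l i) := fun i => by simp [hA_def]
      have hB : ∀ i, B i ↔ G.Adj b (l i) := fun i => by simp [hB_def]
      have p1 : ∀ i, A i ∨ B i := by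
        intro i; rcases hAB i with h | h
        · exact Or.inl ((hA i).2 h)
        · exact Or.inr ((hB i).2 h)
      have p2 : ¬(A 0 ∧ A 1 ∧ A 2) := by
        rintro ⟨h0, h1, h2⟩
        exact hfree (claw_emb G a (l 0) (l 1) (l 2)
          (hlne 0 1 (by decide)) (hlne 0 2 (by decide)) (hlne 1 2 (by decide))
          ((hA 0).1 h0) ((hA 1).1 h1) ((hA 2).1 h2)
          (hll 0 1 (by decide)) (hll 0 2 (by decide)) (hll 1 2 (by decide)))
      have p3 : ¬(B 0 ∧ B 1 ∧ B 2) := by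
        rintro ⟨h0, h1, h2⟩
        exact hfree (claw_emb G b (l 0) (l 1) (l 2)
          (hlne 0 1 (by decide)) (hlne 0 2 (by decide)) (hlne 1 2 (by decide))
          ((hB 0).1 h0) ((hB 1).1 h1) ((hB 2).1 h2)
          (hll 0 1 (by decide)) (hll 0 2 (by decide)) (hll 1 2 (by decide)))
      have p4 : ∀ i i', i ≠ i' → A i → A i' → (B i ∨ B i') := by
        intro i i' hii hAi hAi'
        by_contra hcon
        push_neg at hcon
        obtain ⟨hBi, hBi'⟩ := hcon
        refine hfree (claw_emb G a b (l i) (l i')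
          (Ne.symm (hlb i)) (Ne.symm (hlb i')) (hlne i i' hii)
          hab ((hA i).1 hAi) ((hA i').1 hAi')
          (fun h => hBi ((hB i).2 h)) (fun h => hBi' ((hB i').2 h)) (hll i i' hii))
      have p5 : ∀ i i', i ≠ i' → B i → B i' → (A i ∨ A i') := by
        intro i i' hii hBi hBi'
        by_contra hcon
        push_neg at hcon
        obtain ⟨hAi, hAi'⟩ := hcon
        refine hfree (claw_emb G b a (l i) (l i')
          (Ne.symm (hla i)) (Ne.symm (hla i')) (hlne i i' hii)
          hab.symm ((hB i).1 hBi) ((hB i').1 hBi')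
          (fun h => hAi ((hA i).2 h)) (fun h => hAi' ((hA i').2 h)) (hll i i' hii))
      obtain ⟨t, p, q, htp, htq, hpq, hAt, hBt, hAp, hBp, hAq, hBq⟩ := pattern A B p1 p2 p3 p4 p5
      exact build_iso_s14 G hcard a b (l t) (l p) (l q)
        hab ((hA t).1 hAt) ((hB t).1 hBt) ((hA p).1 hAp) ((hB q).1 hBq)
        (fun h => hAq ((hA q).2 h)) (fun h => hBp ((hB p).2 h))
        (hll t p htp) (hll t q htq) (hll p q hpq)
        (hlne t p htp) (hlne t q htq) (hlne p q hpq)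
        (Ne.symm (hla p)) (Ne.symm (hla q)) (Ne.symm (hlb p)) (Ne.symm (hlb q))
    | inr j =>
      exfalso
      have hmm : e (Sum.inr j) = m := by rw [← hsm, e.apply_symm_apply]
      set c : V := (e (Sum.inl 0)).1 with hc_def
      have hcb : c ≠ b := (e (Sum.inl 0)).2
      set l : Fin 3 → V := fun i => (e (Sum.inr i)).1 with hl_def
      have hlb : ∀ i, l i ≠ b := fun i => (e (Sum.inr i)).2
      have hlj : l j = a := congrArg Subtype.val hmm
      have hca : c ≠ a := by
        intro hv
        have : e (Sum.inl 0) = m := Subtype.ext hv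
        rw [← hmm] at this
        exact Sum.inl_ne_inr (e.toEquiv.injective this)
      have hcl : ∀ i, c ≠ l i := by
        intro i hv
        exact Sum.inl_ne_inr (e.toEquiv.injective (Subtype.ext hv))
      have hlne : ∀ i i' : Fin 3, i ≠ i' → l i ≠ l i' := by
        intro i i' hii hv
        exact hii (Sum.inr_injective (e.toEquiv.injective (Subtype.ext hv)))
      -- adjacency of center to leaves ≠ j
      have hclk : ∀ k, k ≠ j → G.Adj c (l k) := by
        intro k hkj
        have h := (key (Sum.inl 0) (Sum.inr k)).2 (by simp [claw_adj])
        rw [unf] at h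
        obtain ⟨hne, hor⟩ := h
        have hlka : l k ≠ a := by rw [← hlj]; exact hlne k j hkj
        rcases hor with (h | ⟨h, _⟩) | (h | ⟨h, _⟩)
        · exact h
        · exact absurd h hca
        · exact h.symm
        · exact absurd h hlka
      -- center adjacent to a or b (through merged vertex)
      have hcab : G.Adj c a ∨ G.Adj b c := by
        have h := (key (Sum.inl 0) (Sum.inr j)).2 (by simp [claw_adj])
        rw [hmm] at h
        rw [unf] at h
        obtain ⟨hne, hor⟩ := h
        rcases hor with (h | ⟨h, _⟩) | (h | ⟨_, h⟩)
        · exact Or.inl h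
        · exact absurd h hca
        · exact Or.inl h.symm
        · exact Or.inr h
      -- leaves k ≠ j not adjacent to a nor b nor each other
      have hnab : ∀ k, k ≠ j → ¬ G.Adj a (l k) ∧ ¬ G.Adj b (l k) := by
        intro k hkj
        have h : ¬ (G.contractEdge a b).Adj (e (Sum.inr j)) (e (Sum.inr k)) := by
          rw [key]; simp [claw_adj]
        rw [hmm, unf] at h
        push_neg at h
        have hlka : l k ≠ a := by rw [← hlj]; exact hlne k j hkj
        have hne : (m : V) ≠ l k := by
          intro hv; exact hlka (hv.symm)
        have h2 := h hne
        exact ⟨h2.1.1, h2.1.2 rfl⟩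
      have hll : ∀ k k' : Fin 3, k ≠ k' → ¬ G.Adj (l k) (l k') := by
        intro k k' hkk hadj
        have h : ¬ (G.contractEdge a b).Adj (e (Sum.inr k)) (e (Sum.inr k')) := by
          rw [key]; simp [claw_adj]
        exact h ((unf _ _).2 ⟨hlne k k' hkk, Or.inl (Or.inl hadj)⟩)
      have hex : ∀ jj : Fin 3, ∃ k k' : Fin 3, k ≠ k' ∧ k ≠ jj ∧ k' ≠ jj := by decide
      obtain ⟨k, k', hkk, hkj, hk'j⟩ := hex j
      have hlka : ∀ kk, kk ≠ j → l kk ≠ a := fun kk hkkj => hlj ▸ hlne kk j hkkj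
      obtain ⟨hnak, hnbk⟩ := hnab k hkj
      obtain ⟨hnak', hnbk'⟩ := hnab k' hk'j
      rcases hcab with hadj | hadj
      · -- claw at c with a, l k, l k'
        exact hfree (claw_emb G c a (l k) (l k')
          (Ne.symm (hlka k hkj)) (Ne.symm (hlka k' hk'j)) (hlne k k' hkk)
          hadj (hclk k hkj) (hclk k' hk'j)
          hnak hnak' (hll k k' hkk))
      · -- claw at c with b, l k, l k'
        refine hfree (claw_emb G c b (l k) (l k')
          (Ne.symm (hlb k)) (Ne.symm (hlb k')) (hlne k k' hkk) hadj.symm (hclk k hkj)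
          (hclk k' hk'j) hnbk hnbk' (hll k k' hkk))
  · rintro ⟨e⟩
    exact freeSplit_transfer e bull_freeSplit
end

section
/- A finite simple graph G is 2K_2-split if and only if G is isomorphic to the disjoint union P_2 ∪ C_3 or to the disjoint union P_2 ∪ P_3. -/
/-!
A contraction has one vertex fewer, so a `2K₂`-split graph `G` has five vertices. If `G/uv ≃ 2K₂`,
the merged vertex has one neighbour `a`, adjacent in `G` to `u` or `v`, and the other edge `bc`
of `2K₂` is an edge of `G` joined to none of `u, v, a`. So `G` is the edge `bc` beside a triangle
or an induced path on `u, v, a`. Conversely, contracting an edge of `C₃` or `P₃` leaves `P₂`.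
-/

open SimpleGraph

namespace SimpleGraph

variable {V W α β : Type*}

section Contraction

variable (G : SimpleGraph V) (u v : V)

theorem contractEdge_adj {a b : {x // x ≠ v}} :
    (G.contractEdge u v).Adj a b ↔
      a ≠ b ∧ (G.Adj a b ∨ a.1 = u ∧ G.Adj v b ∨ b.1 = u ∧ G.Adj v a) := by
  simp only [contractEdge, fromRel_adj, adj_comm G b.1]
  tauto

instance [DecidableEq V] [DecidableRel G.Adj] : DecidableRel (G.contractEdge u v).Adj :=
  fun _ _ => decidable_of_iff' _ (contractEdge_adj G u v)

variable {G u v}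

theorem contractEdge_adj_of_ne {a b : {x // x ≠ v}} (ha : a.1 ≠ u) (hb : b.1 ≠ u) :
    (G.contractEdge u v).Adj a b ↔ G.Adj a b := by
  rw [contractEdge_adj]
  exact ⟨fun h => by tauto, fun h => ⟨fun hab => h.ne (congrArg Subtype.val hab), .inl h⟩⟩

theorem contractEdge_adj_mk_left (huv : u ≠ v) {b : {x // x ≠ v}} (hb : b.1 ≠ u) :
    (G.contractEdge u v).Adj ⟨u, huv⟩ b ↔ G.Adj u b ∨ G.Adj v b := by
  rw [contractEdge_adj]
  refine ⟨fun h => by tauto, fun h => ⟨fun hub => hb (congrArg Subtype.val hub).symm, ?_⟩⟩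
  tauto

theorem card_eq_card_add_one_of_iso_contractEdge [Fintype V] [Fintype α] {H : SimpleGraph α}
    (e : H ≃g G.contractEdge u v) : Fintype.card V = Fintype.card α + 1 := by
  classical
  rw [← Fintype.card_congr (Equiv.optionSubtypeNe v), Fintype.card_option,
    Fintype.card_congr e.toEquiv]

end Contraction

def Iso.contractEdge {G : SimpleGraph V} {H : SimpleGraph W} (φ : G ≃g H) (u v : V) :
    G.contractEdge u v ≃g H.contractEdge (φ u) (φ v) where
  toEquiv := φ.toEquiv.subtypeEquiv fun _ => φ.injective.ne_iff.symm
  map_rel_iff' := by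
    intro a b
    simp [contractEdge_adj, φ.injective.eq_iff, Subtype.ext_iff, φ.map_adj_iff]

theorem Iso.exists_contractEdge_iso {G : SimpleGraph V} {H : SimpleGraph W} {K : SimpleGraph α}
    (φ : G ≃g H) {x y : W} (hxy : H.Adj x y) (hK : Nonempty (K ≃g H.contractEdge x y)) :
    ∃ u v, G.Adj u v ∧ Nonempty (K ≃g G.contractEdge u v) := by
  obtain ⟨ψ⟩ := hK
  exact ⟨φ.symm x, φ.symm y, φ.symm.map_adj_iff.2 hxy, ⟨ψ.trans (φ.symm.contractEdge x y)⟩⟩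

section Embeddings

variable {G : SimpleGraph V} {x y z : V}

@[simps]
def Embedding.pathGraphTwo (hxy : G.Adj x y) : pathGraph 2 ↪g G where
  toFun := ![x, y]
  inj' := by
    intro i j
    fin_cases i <;> fin_cases j <;> simp [hxy.ne, hxy.ne.symm]
  map_rel_iff' {i j} := by
    change G.Adj (![x, y] i) (![x, y] j) ↔ _
    fin_cases i <;> fin_cases j <;> simp [pathGraph_adj, hxy, hxy.symm]

@[simps]
def Embedding.pathGraphThree (hxy : G.Adj x y) (hyz : G.Adj y z) (hxz : ¬G.Adj x z)
    (hne : x ≠ z) : pathGraph 3 ↪g G where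
  toFun := ![x, y, z]
  inj' := by
    intro i j
    fin_cases i <;> fin_cases j <;> simp [hxy.ne, hxy.ne.symm, hyz.ne, hyz.ne.symm, hne, hne.symm]
  map_rel_iff' {i j} := by
    change G.Adj (![x, y, z] i) (![x, y, z] j) ↔ _
    fin_cases i <;> fin_cases j <;>
      simp [pathGraph_adj, hxy, hxy.symm, hyz, hyz.symm, hxz, G.adj_comm z x]

@[simps]
def Embedding.cycleGraphThree (hxy : G.Adj x y) (hyz : G.Adj y z) (hxz : G.Adj x z) :
    cycleGraph 3 ↪g G where
  toFun := ![x, y, z]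
  inj' := by
    intro i j
    fin_cases i <;> fin_cases j <;>
      simp [hxy.ne, hxy.ne.symm, hyz.ne, hyz.ne.symm, hxz.ne, hxz.ne.symm]
  map_rel_iff' {i j} := by
    change G.Adj (![x, y, z] i) (![x, y, z] j) ↔ _
    fin_cases i <;> fin_cases j <;>
      simp [cycleGraph_three_eq_top, hxy, hxy.symm, hyz, hyz.symm, hxz, hxz.symm]

end Embeddings

/-- The images of `f` and `g` are disjoint because `H` has no isolated vertex; bijectivity then
follows by counting. -/
theorem nonempty_iso_sum_of_card [Fintype V] [Fintype α] [Fintype β] {G : SimpleGraph V}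
    {H : SimpleGraph α} {K : SimpleGraph β} (f : H ↪g G) (g : K ↪g G)
    (hcard : Fintype.card α + Fintype.card β = Fintype.card V)
    (hH : ∀ a, ∃ a', H.Adj a a') (hcross : ∀ a b, ¬G.Adj (f a) (g b)) :
    Nonempty (G ≃g H ⊕g K) := by
  have hne : ∀ a b, f a ≠ g b := fun a b hab => by
    obtain ⟨a', ha'⟩ := hH a
    exact hcross a' b (hab ▸ (f.map_adj_iff.2 ha').symm)
  have hbij : Function.Bijective (Sum.elim f g) :=
    (Fintype.bijective_iff_injective_and_card _).2
      ⟨f.injective.sumElim g.injective hne, by simp [hcard]⟩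
  refine ⟨(⟨Equiv.ofBijective _ hbij, ?_⟩ : H ⊕g K ≃g G).symm⟩
  rintro (a | b) (a' | b') <;> simp [hcross, G.adj_comm]

instance {n : ℕ} : DecidableRel (pathGraph n).Adj :=
  fun _ _ => decidable_of_iff' _ pathGraph_adj

instance {G : SimpleGraph V} {H : SimpleGraph W} [DecidableRel G.Adj] [DecidableRel H.Adj] :
    DecidableRel (G ⊕g H).Adj
  | .inl _, .inl _ => decidable_of_iff' _ sum_adj_inl
  | .inl _, .inr _ => .isFalse (by simp)
  | .inr _, .inl _ => .isFalse (by simp)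
  | .inr _, .inr _ => decidable_of_iff' _ sum_adj_inr

theorem exists_opposite_edge_sum_pathGraph_two (s : Fin 2 ⊕ Fin 2) :
    ∃ t b c, (pathGraph 2 ⊕g pathGraph 2).Adj s t ∧ (pathGraph 2 ⊕g pathGraph 2).Adj b c ∧
      ¬(pathGraph 2 ⊕g pathGraph 2).Adj s b ∧ ¬(pathGraph 2 ⊕g pathGraph 2).Adj s c ∧
      ¬(pathGraph 2 ⊕g pathGraph 2).Adj t b ∧ ¬(pathGraph 2 ⊕g pathGraph 2).Adj t c := by
  revert s
  decide

def sumFinSuccAbove : Fin 2 ⊕ Fin 2 → {x : Fin 2 ⊕ Fin 3 // x ≠ .inr 1} :=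
  Sum.elim (fun i => ⟨.inl i, Sum.inl_ne_inr⟩)
    (fun i => ⟨.inr (Fin.succAbove 1 i), by simp [Fin.succAbove_ne]⟩)

theorem bijective_sumFinSuccAbove : Function.Bijective sumFinSuccAbove := by
  decide

theorem nonempty_iso_contractEdge_sum_cycleGraph_three :
    Nonempty (pathGraph 2 ⊕g pathGraph 2 ≃g
      (pathGraph 2 ⊕g cycleGraph 3).contractEdge (.inr 0) (.inr 1)) :=
  ⟨⟨Equiv.ofBijective _ bijective_sumFinSuccAbove, by decide⟩⟩

theorem nonempty_iso_contractEdge_sum_pathGraph_three :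
    Nonempty (pathGraph 2 ⊕g pathGraph 2 ≃g
      (pathGraph 2 ⊕g pathGraph 3).contractEdge (.inr 0) (.inr 1)) :=
  ⟨⟨Equiv.ofBijective _ bijective_sumFinSuccAbove, by decide⟩⟩

section Reconstruction

variable {G : SimpleGraph V} {u v : V}

theorem exists_neighbor_and_separate_edge_of_iso_contractEdge (huv : G.Adj u v)
    (e : pathGraph 2 ⊕g pathGraph 2 ≃g G.contractEdge u v) :
    ∃ a b c, (G.Adj u a ∨ G.Adj v a) ∧ a ≠ u ∧ a ≠ v ∧ G.Adj b c ∧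
      ∀ x ∈ ({b, c} : Set V), ∀ y ∈ ({u, v, a} : Set V), ¬G.Adj x y := by
  set s : {x // x ≠ v} := ⟨u, huv.ne⟩
  obtain ⟨t, b, c, hst, hbc, hsb, hsc, htb, htc⟩ :=
    exists_opposite_edge_sum_pathGraph_two (e.symm s)
  rw [← e.map_adj_iff, e.apply_symm_apply] at hst hsb hsc
  rw [← e.map_adj_iff] at hbc htb htc
  have ne_u {x : {x // x ≠ v}} (hx : x ≠ s) : x.1 ≠ u := fun h => hx (Subtype.ext h)
  have ht : (e t).1 ≠ u := ne_u hst.ne'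
  have hb : (e b).1 ≠ u := ne_u fun h => hsc (h ▸ hbc)
  have hc : (e c).1 ≠ u := ne_u fun h => hsb (h ▸ hbc.symm)
  rw [contractEdge_adj_mk_left huv.ne ht] at hst
  rw [contractEdge_adj_mk_left huv.ne hb] at hsb
  rw [contractEdge_adj_mk_left huv.ne hc] at hsc
  rw [contractEdge_adj_of_ne hb hc] at hbc
  rw [contractEdge_adj_of_ne ht hb] at htb
  rw [contractEdge_adj_of_ne ht hc] at htc
  refine ⟨e t, e b, e c, hst, ht, (e t).2, hbc, ?_⟩
  simp only [Set.mem_insert_iff, Set.mem_singleton_iff]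
  rintro x (rfl | rfl) y (rfl | rfl | rfl) <;> rw [G.adj_comm] <;> tauto

theorem nonempty_iso_sum_cycleGraph_three_or_pathGraph_three [Fintype V]
    (hcard : Fintype.card V = 5) {a b c : V} (huv : G.Adj u v) (hua : G.Adj u a) (hav : a ≠ v)
    (hbc : G.Adj b c)
    (hcross : ∀ x ∈ ({b, c} : Set V), ∀ y ∈ ({u, v, a} : Set V), ¬G.Adj x y) :
    Nonempty (G ≃g pathGraph 2 ⊕g cycleGraph 3) ∨
      Nonempty (G ≃g pathGraph 2 ⊕g pathGraph 3) := by
  have hcross_of_range {n : ℕ} {K : SimpleGraph (Fin n)} (g : K ↪g G)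
      (hg : ∀ j, g j ∈ ({u, v, a} : Set V)) :
      ∀ i j, ¬G.Adj (Embedding.pathGraphTwo hbc i) (g j) := by
    intro i j
    refine hcross _ ?_ _ (hg j)
    fin_cases i <;> simp
  by_cases hva : G.Adj v a
  · refine .inl (nonempty_iso_sum_of_card _ (.cycleGraphThree hua.symm huv hva.symm)
      (by simp [hcard]) (by decide) (hcross_of_range _ ?_))
    intro j
    fin_cases j <;> simp
  · refine .inr (nonempty_iso_sum_of_card _
      (.pathGraphThree hua.symm huv (fun h => hva h.symm) hav) (by simp [hcard]) (by decide)
      (hcross_of_range _ ?_))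
    intro j
    fin_cases j <;> simp

end Reconstruction

end SimpleGraph

/-- A finite simple graph `G` is `2K_2`-split if and only if `G` is isomorphic to
`P_2 ∪ C_3` or to `P_2 ∪ P_3`. -/
theorem stmt15 {V : Type*} [Fintype V] (G : SimpleGraph V) :
    (∃ u v, G.Adj u v ∧
        Nonempty ((pathGraph 2 ⊕g pathGraph 2) ≃g G.contractEdge u v)) ↔
      (Nonempty (G ≃g (pathGraph 2 ⊕g cycleGraph 3)) ∨
        Nonempty (G ≃g (pathGraph 2 ⊕g pathGraph 3))) := by
  constructor
  · rintro ⟨u, v, huv, ⟨e⟩⟩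
    have hcard : Fintype.card V = 5 := by
      simpa using card_eq_card_add_one_of_iso_contractEdge e
    obtain ⟨a, b, c, hua | hva, hau, hav, hbc, hcross⟩ :=
      exists_neighbor_and_separate_edge_of_iso_contractEdge huv e
    · exact nonempty_iso_sum_cycleGraph_three_or_pathGraph_three hcard huv hua hav hbc hcross
    · exact nonempty_iso_sum_cycleGraph_three_or_pathGraph_three hcard huv.symm hva hau hbc
        (by simpa only [Set.insert_comm] using hcross)
  · rintro (⟨⟨φ⟩⟩ | ⟨⟨φ⟩⟩)
    · exact φ.exists_contractEdge_iso (by decide) nonempty_iso_contractEdge_sum_cycleGraph_three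
    · exact φ.exists_contractEdge_iso (by decide) nonempty_iso_contractEdge_sum_pathGraph_three
end

section
/- For every n ≥ 2, there is no P_n-free-split graph; in particular, no finite simple graph is simultaneously P_4-free and P_4-split. -/
open SimpleGraph

lemma build_embed {V : Type*} (G : SimpleGraph V) (a b : V) (hab : G.Adj a b)
    {n : ℕ} (f : Fin n → V) (hinj : Function.Injective f) (hfb : ∀ i, f i ≠ b)
    (k : Fin n) (hk : f k = a)
    (hA : ∀ i j, i ≠ k → j ≠ k → (G.Adj (f i) (f j) ↔ (pathGraph n).Adj i j))
    (hB : ∀ j, j ≠ k → ((G.Adj a (f j) ∨ G.Adj b (f j)) ↔ (pathGraph n).Adj k j)) :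
    Nonempty (pathGraph n ↪g G) := by
  have hne : a ≠ b := hab.ne
  have hfa : ∀ p : Fin n, p ≠ k → f p ≠ a := by
    intro p hp e
    exact hp (hinj (e.trans hk.symm))
  -- case A helper
  have mkA : ∀ c : V, (c = a ∨ c = b) → (∀ j, (pathGraph n).Adj k j → G.Adj c (f j)) →
      Nonempty (pathGraph n ↪g G) := by
    intro c hc hall
    refine ⟨⟨⟨fun i => if i = k then c else f i, ?_⟩, ?_⟩⟩
    · intro i j h
      dsimp at h
      split_ifs at h with h1 h2 h2
      · exact h1.trans h2.symm
      · rcases hc with rfl | rfl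
        · exact absurd h.symm (hfa j h2)
        · exact absurd h.symm (hfb j)
      · rcases hc with rfl | rfl
        · exact absurd h (hfa i h1)
        · exact absurd h (hfb i)
      · exact hinj h
    · intro i j
      show G.Adj (if i = k then c else f i) (if j = k then c else f j) ↔ _
      split_ifs with h1 h2 h2
      · subst h1; subst h2
        simp [G.irrefl]
      · subst h1
        constructor
        · intro h
          refine (hB j h2).1 ?_
          rcases hc with rfl | rfl
          · exact Or.inl h
          · exact Or.inr h
        · exact hall j
      · subst h2
        rw [G.adj_comm, (pathGraph n).adj_comm]
        constructor
        · intro h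
          refine (hB i h1).1 ?_
          rcases hc with rfl | rfl
          · exact Or.inl h
          · exact Or.inr h
        · exact hall i
      · exact hA i j h1 h2
  -- val-level facts
  have hAB' : ∀ p q : Fin n, p.val ≠ k.val → q.val ≠ k.val →
      (G.Adj (f p) (f q) ↔ (p.val + 1 = q.val ∨ q.val + 1 = p.val)) := by
    intro p q hp hq
    rw [hA p q (fun e => hp (congrArg Fin.val e)) (fun e => hq (congrArg Fin.val e)),
      pathGraph_adj]
  have hcB : ∀ (c : V), (c = a ∨ c = b) → ∀ q : Fin n, q.val ≠ k.val → G.Adj c (f q) →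
      (k.val + 1 = q.val ∨ q.val + 1 = k.val) := by
    intro c hc q hq h
    rw [← pathGraph_adj]
    refine (hB q (fun e => hq (congrArg Fin.val e))).1 ?_
    rcases hc with rfl | rfl
    · exact Or.inl h
    · exact Or.inr h
  -- case B helper
  have mkB : ∀ (c1 c2 : V), ((c1 = a ∧ c2 = b) ∨ (c1 = b ∧ c2 = a)) →
      ∀ (jl jr : Fin n), jl.val + 1 = k.val → k.val + 1 = jr.val →
      G.Adj c1 (f jl) → G.Adj c2 (f jr) → ¬ G.Adj c2 (f jl) → ¬ G.Adj c1 (f jr) →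
      Nonempty (pathGraph n ↪g G) := by
    intro c1 c2 hcc jl jr hjl hjr h1 h2 h3 h4
    have hkn : k.val < n := k.isLt
    have hjrn : jr.val < n := jr.isLt
    have hkr : k.val + 1 < n := by omega
    have hc1 : c1 = a ∨ c1 = b := by tauto
    have hc2 : c2 = a ∨ c2 = b := by tauto
    have hc12 : c1 ≠ c2 := by
      rcases hcc with ⟨rfl, rfl⟩ | ⟨rfl, rfl⟩
      · exact hne
      · exact hne.symm
    have hC12 : G.Adj c1 c2 := by
      rcases hcc with ⟨rfl, rfl⟩ | ⟨rfl, rfl⟩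
      · exact hab
      · exact hab.symm
    have hne1 : ∀ q : Fin n, q.val ≠ k.val → ¬ (f q = c1) := by
      intro q hq e
      rcases hc1 with rfl | rfl
      · exact hfa q (fun e' => hq (congrArg Fin.val e')) e
      · exact hfb q e
    have hne2 : ∀ q : Fin n, q.val ≠ k.val → ¬ (f q = c2) := by
      intro q hq e
      rcases hc2 with rfl | rfl
      · exact hfa q (fun e' => hq (congrArg Fin.val e')) e
      · exact hfb q e
    have hc1f : ∀ q : Fin n, q.val ≠ k.val → (G.Adj c1 (f q) ↔ q.val + 1 = k.val) := by
      intro q hq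
      constructor
      · intro h
        rcases hcB c1 hc1 q hq h with h' | h'
        · exfalso
          have e : q = jr := Fin.ext (by omega)
          rw [e] at h
          exact h4 h
        · exact h'
      · intro h
        have e : q = jl := Fin.ext (by omega)
        rw [e]
        exact h1
    have hc2f : ∀ q : Fin n, q.val ≠ k.val → (G.Adj c2 (f q) ↔ k.val + 1 = q.val) := by
      intro q hq
      constructor
      · intro h
        rcases hcB c2 hc2 q hq h with h' | h'
        · exact h'
        · exfalso
          have e : q = jl := Fin.ext (by omega)
          rw [e] at h
          exact h3 h
      · intro h
        have e : q = jr := Fin.ext (by omega)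
        rw [e]
        exact h2
    have hfc1 : ∀ q : Fin n, q.val ≠ k.val → (G.Adj (f q) c1 ↔ q.val + 1 = k.val) := by
      intro q hq; rw [G.adj_comm]; exact hc1f q hq
    have hfc2 : ∀ q : Fin n, q.val ≠ k.val → (G.Adj (f q) c2 ↔ k.val + 1 = q.val) := by
      intro q hq; rw [G.adj_comm]; exact hc2f q hq
    have e11 : G.Adj c1 c1 ↔ (0 = 1) := iff_of_false (fun h => (G.ne_of_adj h) rfl) (by omega)
    have e22 : G.Adj c2 c2 ↔ (0 = 1) := iff_of_false (fun h => (G.ne_of_adj h) rfl) (by omega)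
    have e12 : G.Adj c1 c2 ↔ (0 = 0) := iff_of_true hC12 rfl
    have e21 : G.Adj c2 c1 ↔ (0 = 0) := iff_of_true hC12.symm rfl
    refine ⟨⟨⟨fun i => if i.val < k.val then f i
        else if i.val = k.val then c1
        else if i.val = k.val + 1 then c2
        else f ⟨i.val - 1, by omega⟩, ?_⟩, ?_⟩⟩
    · intro i j h
      dsimp at h
      have hik := i.isLt
      have hjk := j.isLt
      split_ifs at h <;>
        first
          | exact Fin.ext (by omega)
          | exact Fin.ext (by
              have hv := congrArg Fin.val (hinj h)
              (try simp only [Fin.val_mk] at hv)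
              omega)
          | exact absurd h (hne1 _ (by (try simp only [Fin.val_mk]); omega))
          | exact absurd h (hne2 _ (by (try simp only [Fin.val_mk]); omega))
          | exact absurd h.symm (hne1 _ (by (try simp only [Fin.val_mk]); omega))
          | exact absurd h.symm (hne2 _ (by (try simp only [Fin.val_mk]); omega))
          | exact absurd h hc12
          | exact absurd h.symm hc12
    · intro i j
      show G.Adj (if i.val < k.val then f i else if i.val = k.val then c1
          else if i.val = k.val + 1 then c2 else f ⟨i.val - 1, by omega⟩)
        (if j.val < k.val then f j else if j.val = k.val then c1
          else if j.val = k.val + 1 then c2 else f ⟨j.val - 1, by omega⟩) ↔ _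
      rw [pathGraph_adj]
      have hik := i.isLt
      have hjk := j.isLt
      split_ifs <;>
        first
          | (simp (disch := (try simp only [Fin.val_mk]); omega) only
              [hAB', hc1f, hc2f, hfc1, hfc2, e11, e12, e21, e22, Fin.val_mk]
             omega)
          | (simp (disch := (try simp only [Fin.val_mk]); omega) only
              [hAB', hc1f, hc2f, hfc1, hfc2, e11, e12, e21, e22, Fin.val_mk]
             rw [true_iff]
             omega)
          | (simp (disch := (try simp only [Fin.val_mk]); omega) only
              [hAB', hc1f, hc2f, hfc1, hfc2, e11, e12, e21, e22, Fin.val_mk])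
  -- main case analysis
  by_cases hAall : ∀ j, (pathGraph n).Adj k j → G.Adj a (f j)
  · exact mkA a (Or.inl rfl) hAall
  by_cases hBall : ∀ j, (pathGraph n).Adj k j → G.Adj b (f j)
  · exact mkA b (Or.inr rfl) hBall
  push_neg at hAall hBall
  obtain ⟨j0, hj0p, hj0a⟩ := hAall
  obtain ⟨j1, hj1p, hj1b⟩ := hBall
  have hj0k : j0 ≠ k := ((pathGraph n).ne_of_adj hj0p).symm
  have hj1k : j1 ≠ k := ((pathGraph n).ne_of_adj hj1p).symm
  have hj0b : G.Adj b (f j0) := by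
    rcases (hB j0 hj0k).2 hj0p with h | h
    · exact absurd h hj0a
    · exact h
  have hj1a : G.Adj a (f j1) := by
    rcases (hB j1 hj1k).2 hj1p with h | h
    · exact h
    · exact absurd h hj1b
  have hv0 := pathGraph_adj.1 hj0p
  have hv1 := pathGraph_adj.1 hj1p
  have hj01 : j0 ≠ j1 := by
    intro e
    rw [e] at hj0a
    exact hj0a hj1a
  rcases hv0 with hv0 | hv0 <;> rcases hv1 with hv1 | hv1
  · exact absurd (Fin.ext (by omega) : j0 = j1) hj01
  · -- j1 left (Adj a), j0 right (Adj b): c1 = a, c2 = b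
    exact mkB a b (Or.inl ⟨rfl, rfl⟩) j1 j0 hv1 hv0 hj1a hj0b hj1b hj0a
  · -- j0 left (Adj b), j1 right (Adj a): c1 = b, c2 = a
    exact mkB b a (Or.inr ⟨rfl, rfl⟩) j0 j1 hv0 hv1 hj0b hj1a hj0a hj1b
  · exact absurd (Fin.ext (by omega) : j0 = j1) hj01

lemma key_s18 {V : Type*} (G : SimpleGraph V) (a b : V) (hab : G.Adj a b)
    {n : ℕ} (φ : pathGraph n ≃g G.contractEdge a b) : Nonempty (pathGraph n ↪g G) := by
  have hne : a ≠ b := hab.ne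
  set f : Fin n → V := fun i => (φ i).1 with hfdef
  have hfb : ∀ i, f i ≠ b := fun i => (φ i).2
  have hinj : Function.Injective f := fun i j h => φ.injective (Subtype.ext h)
  set k : Fin n := φ.symm ⟨a, hne⟩ with hkdef
  have hk : f k = a := by
    show (φ (φ.symm ⟨a, hne⟩)).1 = a
    rw [φ.apply_symm_apply]
  have hco : ∀ x y : {x : V // x ≠ b}, (G.contractEdge a b).Adj x y ↔
      (x ≠ y ∧ ((G.Adj x.1 y.1 ∨ (x.1 = a ∧ G.Adj b y.1)) ∨
        (G.Adj y.1 x.1 ∨ (y.1 = a ∧ G.Adj b x.1)))) := fun x y =>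
    fromRel_adj _ x y
  have hfa : ∀ p : Fin n, p ≠ k → f p ≠ a := by
    intro p hp e
    apply hp
    rw [hkdef]
    have : φ p = ⟨a, hne⟩ := Subtype.ext e
    rw [← this, φ.symm_apply_apply]
  have hA : ∀ i j, i ≠ k → j ≠ k → (G.Adj (f i) (f j) ↔ (pathGraph n).Adj i j) := by
    intro i j hi hj
    rw [← φ.map_adj_iff, hco]
    constructor
    · intro h
      exact ⟨fun e => h.ne (congrArg Subtype.val e), Or.inl (Or.inl h)⟩
    · rintro ⟨-, (h | ⟨e, -⟩) | (h | ⟨e, -⟩)⟩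
      · exact h
      · exact absurd e (hfa i hi)
      · exact h.symm
      · exact absurd e (hfa j hj)
  have hB : ∀ j, j ≠ k → ((G.Adj a (f j) ∨ G.Adj b (f j)) ↔ (pathGraph n).Adj k j) := by
    intro j hj
    rw [← φ.map_adj_iff, hco]
    have hfk : (φ k).1 = a := hk
    constructor
    · intro h
      refine ⟨fun e => hj (φ.injective e).symm, ?_⟩
      rcases h with h | h
      · exact Or.inl (Or.inl (by rw [hfk]; exact h))
      · exact Or.inl (Or.inr ⟨hfk, h⟩)
    · rintro ⟨-, (h | ⟨-, h⟩) | (h | ⟨e, -⟩)⟩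
      · rw [hfk] at h; exact Or.inl h
      · exact Or.inr h
      · rw [hfk] at h; exact Or.inl h.symm
      · exact absurd e (hfa j hj)
  exact build_embed G a b hab f hinj hfb k hk hA hB

/-- For every `n ≥ 2`, there is no `P_n`-free-split graph (in particular, no graph
is simultaneously `P_4`-free and `P_4`-split). -/
theorem stmt18 (n : ℕ) (hn : 2 ≤ n) {V : Type*} [Fintype V] (G : SimpleGraph V) :
    ¬ IsFreeSplitOf G (pathGraph n) := by
  rintro ⟨hfree, a, b, hadj, ⟨φ⟩⟩
  exact hfree (key_s18 G a b hadj φ)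
end
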